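/- arXiv:1003.3386 — 10 statements merged into one kernel-verified Lean document; each statement's English description precedes it below -/
import Mathlib

section
/- Let p be a prime, F_q a finite field of characteristic p, and s_1, s_2 positive integers. In the quotient ring R̂ = F_q[x,y]/⟨x^{p^{s_1}} − 1, y^{p^{s_2}} − 1⟩, the ideal generated by the class of (x − 1)(y − 1) is not equal to the ideal generated by the classes of (x − 1)^m and (y − 1)^n for any integers m, n with 0 < m < p^{s_1} and 0 < n < p^{s_2}. -/
/-!
Specialising `y ↦ 1` (and `x ↦ X`) maps `R̂` onto `F_q[X]/⟨X^{p^{s₁}} − 1⟩` and kills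
`(x − 1)(y − 1)`. If the two ideals were equal, `(x − 1)^m` would lie in the first one, so
`X^{p^{s₁}} − 1` would divide `(X − 1)^m`, which is impossible for degree reasons as `m < p^{s₁}`.
-/

open MvPolynomial

namespace Polynomial

theorem not_X_pow_sub_one_dvd_X_sub_one_pow {R : Type*} [CommRing R] [NoZeroDivisors R]
    [Nontrivial R] {m N : ℕ} (h : m < N) : ¬ (X ^ N - 1 : R[X]) ∣ (X - 1) ^ m := by
  intro hdvd
  have hmonic : ((X - C 1 : R[X]) ^ m).Monic := (monic_X_sub_C 1).pow m
  have hdeg := natDegree_le_of_dvd hdvd (by simpa using hmonic.ne_zero)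
  rw [← C_1, natDegree_X_pow_sub_C, (monic_X_sub_C 1).natDegree_pow, natDegree_X_sub_C,
    mul_one] at hdeg
  omega

end Polynomial

section

variable {R : Type*} [CommRing R]

noncomputable def restrictYOne (N M : ℕ) :
    MvPolynomial (Fin 2) R ⧸ Ideal.span {(X 0 ^ N - 1 : MvPolynomial (Fin 2) R), X 1 ^ M - 1} →+*
      Polynomial R ⧸ Ideal.span {(Polynomial.X ^ N - 1 : Polynomial R)} :=
  Ideal.quotientMap _ (aeval ![Polynomial.X, 1]).toRingHom <| by
    rw [Ideal.span_le]
    rintro _ (rfl | rfl) <;> simp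

theorem restrictYOne_mk (N M : ℕ) (f : MvPolynomial (Fin 2) R) :
    restrictYOne N M (Ideal.Quotient.mk _ f) = Ideal.Quotient.mk _ (aeval ![Polynomial.X, 1] f) :=
  Ideal.quotientMap_mk

theorem mk_X_zero_sub_one_pow_notMem_span [NoZeroDivisors R] [Nontrivial R]
    {N M m : ℕ} (hm : m < N) (I : Ideal (MvPolynomial (Fin 2) R))
    (hI : I = Ideal.span {X 0 ^ N - 1, X 1 ^ M - 1}) :
    Ideal.Quotient.mk I ((X 0 - 1) ^ m) ∉
      Ideal.span {Ideal.Quotient.mk I ((X 0 - 1) * (X 1 - 1))} := by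
  subst hI
  intro hmem
  obtain ⟨c, hc⟩ := Ideal.mem_span_singleton'.mp hmem
  have hzero := congrArg (restrictYOne N M) hc
  rw [map_mul, restrictYOne_mk, restrictYOne_mk] at hzero
  simp only [map_mul, map_sub, map_pow, map_one, aeval_X, Matrix.cons_val_zero,
    Matrix.cons_val_one, sub_self, mul_zero, map_zero] at hzero
  exact Polynomial.not_X_pow_sub_one_dvd_X_sub_one_pow hm
    (Ideal.mem_span_singleton.mp (Ideal.Quotient.eq_zero_iff_mem.mp hzero.symm))

end

theorem stmt_1_general (p : ℕ) (F : Type) [Field F]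
    (s₁ s₂ : ℕ)
    (I : Ideal (MvPolynomial (Fin 2) F))
    (hI : I = Ideal.span {X 0 ^ p ^ s₁ - 1, X 1 ^ p ^ s₂ - 1})
    (m n : ℕ) (hm' : m < p ^ s₁) :
    Ideal.span {Ideal.Quotient.mk I ((X 0 - 1) * (X 1 - 1))} ≠
      Ideal.span {Ideal.Quotient.mk I ((X 0 - 1) ^ m), Ideal.Quotient.mk I ((X 1 - 1) ^ n)} := by
  intro h
  apply mk_X_zero_sub_one_pow_notMem_span hm' I hI
  rw [h]
  exact Ideal.subset_span (Set.mem_insert _ _)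

/-- In `F_q[x,y]/⟨x^{p^{s₁}} − 1, y^{p^{s₂}} − 1⟩`, the ideal generated by the class of
`(x − 1)(y − 1)` is not of the form `⟨(x − 1)^m, (y − 1)^n⟩` with `0 < m < p^{s₁}`,
`0 < n < p^{s₂}`. -/
theorem stmt_1 (p : ℕ) (hp : p.Prime) (F : Type) [Field F] [Fintype F] [CharP F p]
    (s₁ s₂ : ℕ) (hs₁ : 0 < s₁) (hs₂ : 0 < s₂)
    (I : Ideal (MvPolynomial (Fin 2) F))
    (hI : I = Ideal.span {X 0 ^ p ^ s₁ - 1, X 1 ^ p ^ s₂ - 1})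
    (m n : ℕ) (hm : 0 < m) (hm' : m < p ^ s₁) (hn : 0 < n) (hn' : n < p ^ s₂) :
    Ideal.span {Ideal.Quotient.mk I ((X 0 - 1) * (X 1 - 1))} ≠
      Ideal.span {Ideal.Quotient.mk I ((X 0 - 1) ^ m), Ideal.Quotient.mk I ((X 1 - 1) ^ n)} :=
  stmt_1_general p F s₁ s₂ I hI m n hm'
end

section
/- Let F_q be a finite field and let n_1, n_2, k_1, k_2 be positive integers such that (x − 1)^{k_1} divides x^{n_1} − 1 in F_q[x] and (y − 1)^{k_2} divides y^{n_2} − 1 in F_q[y]. Let C = ⟨(x − 1)^{k_1}(y − 1)^{k_2}⟩ ⊆ F_q[x,y]/⟨x^{n_1} − 1, y^{n_2} − 1⟩, let C_x = ⟨(x − 1)^{k_1}⟩ ⊆ F_q[x]/⟨x^{n_1} − 1⟩ and C_y = ⟨(y − 1)^{k_2}⟩ ⊆ F_q[y]/⟨y^{n_2} − 1⟩. Then C is the product code C_x ⊗ C_y: writing each element of F_q[x,y]/⟨x^{n_1} − 1, y^{n_2} − 1⟩ as the class of its unique representative f = Σ_{0 ≤ i < n_1, 0 ≤ j < n_2} f_{ij}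 x^i y^j, the class of f belongs to C if and only if for every j with 0 ≤ j < n_2 the polynomial Σ_{i=0}^{n_1−1} f_{ij} x^i represents an element of C_x, and for every i with 0 ≤ i < n_1 the polynomial Σ_{j=0}^{n_2−1} f_{ij} y^j represents an element of C_y. -/
/-!
Identify `F[x, y]` with `F[x][y]`. Divisibility by `(x - 1)^k₁`, a constant of `F[x][y]`,
means divisibility of every coefficient, i.e. of every row; swapping the variables,
divisibility by `(y - 1)^k₂` means divisibility of every column.
If `f = g a + b₁ (x^n₁ - 1) + b₂ (y^n₂ - 1)` with `g = (x - 1)^k₁ (y - 1)^k₂`, then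
`(x - 1)^k₁` divides `f - b₂ (y^n₂ - 1)`; reduction modulo the monic `y^n₂ - 1` is
`F[x]`-linear and fixes `f` (whose `y`-degree is below `n₂`), so `(x - 1)^k₁` divides `f`.
Conversely, a monic polynomial in `y` dividing `(x - 1)^k₁ h` divides `h`, by the same
linearity and since `F[x]` is a domain; so divisibility by both factors gives divisibility
by `g`.
-/

open MvPolynomial

theorem Ideal.Quotient.mk_mem_span_singleton_mk_iff {A : Type*} [CommRing A] {I : Ideal A}
    {g p : A} :
    Ideal.Quotient.mk I p ∈ Ideal.span {Ideal.Quotient.mk I g} ↔ p ∈ Ideal.span {g} ⊔ I := by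
  rw [← Set.image_singleton, ← Ideal.map_span, Ideal.mem_quotient_iff_mem_sup]

theorem Ideal.Quotient.mk_mem_span_singleton_mk_iff_dvd {A : Type*} [CommRing A] {g q : A}
    (h : g ∣ q) (p : A) :
    Ideal.Quotient.mk (Ideal.span {q}) p ∈ Ideal.span {Ideal.Quotient.mk (Ideal.span {q}) g} ↔
      g ∣ p := by
  rw [mk_mem_span_singleton_mk_iff,
    sup_eq_left.mpr (Ideal.span_singleton_le_span_singleton.mpr h), Ideal.mem_span_singleton]

theorem MvPolynomial.coeff_eq_zero_of_degreeOf_lt {R σ : Type*} [CommSemiring R]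
    {f : MvPolynomial σ R} {m : σ →₀ ℕ} {s : σ} (h : degreeOf s f < m s) : f.coeff m = 0 :=
  notMem_support_iff.mp fun hm => (monomial_le_degreeOf s hm).not_gt h

namespace Polynomial

variable {A : Type*} [CommRing A]

theorem C_dvd_modByMonic {a : A} {p : A[X]} (q : A[X]) (h : C a ∣ p) : C a ∣ p %ₘ q := by
  obtain ⟨c, rfl⟩ := h
  rw [C_mul', smul_modByMonic, ← C_mul']
  exact dvd_mul_right _ _

theorem C_dvd_of_C_dvd_sub_mul_monic [Nontrivial A] {a : A} {p b q : A[X]} (hq : q.Monic)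
    (hp : p.natDegree < q.natDegree) (h : C a ∣ p - b * q) : C a ∣ p := by
  rw [← (modByMonic_eq_self_iff hq).2 (degree_lt_degree hp),
    modByMonic_eq_of_dvd_sub hq (p₂ := p - b * q)
      (by rw [sub_sub_cancel]; exact dvd_mul_left _ _)]
  exact C_dvd_modByMonic q h

theorem Monic.dvd_of_dvd_C_mul [NoZeroDivisors A] {q p : A[X]} {a : A} (hq : q.Monic)
    (ha : a ≠ 0) (h : q ∣ C a * p) : q ∣ p := by
  rw [← modByMonic_eq_zero_iff_dvd hq] at h ⊢
  rwa [C_mul', smul_modByMonic, smul_eq_zero, or_iff_right ha] at h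

end Polynomial

namespace Polynomial.Bivariate

section CommSemiring

variable {R : Type*} [CommSemiring R]

theorem coeff_coeff_swap (P : R[X][Y]) (i j : ℕ) :
    ((swap P).coeff i).coeff j = (P.coeff j).coeff i := by
  induction P using Polynomial.induction_on' with
  | add p q hp hq => simp [hp, hq]
  | monomial n p =>
    induction p using Polynomial.induction_on' with
    | add p q hp hq => simp_all [map_add]
    | monomial m a =>
      rw [swap_monomial_monomial]
      simp only [coeff_monomial]
      split_ifs <;> simp_all [coeff_monomial]

theorem equivMvPolynomial_monomial_monomial (n m : ℕ) (a : R) :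
    equivMvPolynomial R (monomial n (monomial m a)) =
      MvPolynomial.monomial (Finsupp.single 0 m + Finsupp.single 1 n) a := by
  simp [← C_mul_X_pow_eq_monomial, MvPolynomial.monomial_eq, Finsupp.prod_add_index, pow_add,
    mul_assoc]

theorem coeff_equivMvPolynomial (P : R[X][Y]) (i j : ℕ) :
    (equivMvPolynomial R P).coeff (Finsupp.single 0 i + Finsupp.single 1 j) =
      (P.coeff j).coeff i := by
  induction P using Polynomial.induction_on' with
  | add p q hp hq => simp [hp, hq]
  | monomial n p =>
    induction p using Polynomial.induction_on' with
    | add p q hp hq => simp_all [map_add]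
    | monomial m a =>
      rw [equivMvPolynomial_monomial_monomial, MvPolynomial.coeff_monomial]
      simp only [coeff_monomial]
      split_ifs <;> simp_all [Finsupp.ext_iff, Fin.forall_fin_two, coeff_monomial]

theorem equivMvPolynomial_symm_aeval_X_zero (p : R[X]) :
    (equivMvPolynomial R).symm (aeval (MvPolynomial.X 0) p) = C p := by
  rw [← aeval_algHom_apply]
  simpa using aeval_algHom_apply (CAlgHom (R := R) (A := R[X])) X p

theorem equivMvPolynomial_symm_aeval_X_one (p : R[X]) :
    (equivMvPolynomial R).symm (aeval (MvPolynomial.X 1) p) = p.map C := by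
  rw [← aeval_algHom_apply]
  simp [aeval_X_left_eq_map]

/-- `bivariateEquiv s f` is `f` viewed as a polynomial in `X s.rev` whose coefficients are
polynomials in `X s`. -/
noncomputable def bivariateEquiv (s : Fin 2) : MvPolynomial (Fin 2) R ≃ₐ[R] R[X][Y] :=
  ![(equivMvPolynomial R).symm, (equivMvPolynomial R).symm.trans swap] s

theorem bivariateEquiv_aeval_X (s : Fin 2) (p : R[X]) :
    bivariateEquiv s (aeval (MvPolynomial.X s) p) = C p := by
  fin_cases s <;> simp [bivariateEquiv, equivMvPolynomial_symm_aeval_X_zero,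
    equivMvPolynomial_symm_aeval_X_one, swap_map_C]

theorem bivariateEquiv_aeval_X_rev (s : Fin 2) (p : R[X]) :
    bivariateEquiv s (aeval (MvPolynomial.X s.rev) p) = p.map C := by
  fin_cases s <;> simp [bivariateEquiv, equivMvPolynomial_symm_aeval_X_zero,
    equivMvPolynomial_symm_aeval_X_one, swap_C]

theorem coeff_coeff_bivariateEquiv (s : Fin 2) (f : MvPolynomial (Fin 2) R) (i j : ℕ) :
    ((bivariateEquiv s f).coeff j).coeff i =
      f.coeff (Finsupp.single s i + Finsupp.single s.rev j) := by
  fin_cases s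
  · simp [bivariateEquiv, ← coeff_equivMvPolynomial]
  · change ((swap ((equivMvPolynomial R).symm f)).coeff j).coeff i = _
    rw [coeff_coeff_swap, ← coeff_equivMvPolynomial, AlgEquiv.apply_symm_apply, add_comm]
    rfl

theorem natDegree_coeff_bivariateEquiv_le (s : Fin 2) (f : MvPolynomial (Fin 2) R) (j : ℕ) :
    ((bivariateEquiv s f).coeff j).natDegree ≤ degreeOf s f := by
  refine natDegree_le_iff_coeff_eq_zero.mpr fun i hi => ?_
  rw [coeff_coeff_bivariateEquiv]
  exact coeff_eq_zero_of_degreeOf_lt (s := s) (by fin_cases s <;> simpa using hi)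

theorem natDegree_bivariateEquiv_le (s : Fin 2) (f : MvPolynomial (Fin 2) R) :
    (bivariateEquiv s f).natDegree ≤ degreeOf s.rev f := by
  refine natDegree_le_iff_coeff_eq_zero.mpr fun j hj => Polynomial.ext fun i => ?_
  rw [coeff_coeff_bivariateEquiv, coeff_zero]
  exact coeff_eq_zero_of_degreeOf_lt (s := s.rev) (by fin_cases s <;> simpa using hj)

theorem aeval_X_dvd_iff (s : Fin 2) (p : R[X]) (f : MvPolynomial (Fin 2) R) :
    aeval (MvPolynomial.X s) p ∣ f ↔ ∀ j, p ∣ (bivariateEquiv s f).coeff j := by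
  rw [← map_dvd_iff (bivariateEquiv s), bivariateEquiv_aeval_X, C_dvd_iff_dvd_coeff]

theorem aeval_X_dvd_iff_of_degreeOf_lt (s : Fin 2) (p : R[X]) {f : MvPolynomial (Fin 2) R}
    {n m : ℕ} (hn : degreeOf s f < n) (hm : degreeOf s.rev f < m) :
    aeval (MvPolynomial.X s) p ∣ f ↔
      ∀ j < m, p ∣ ∑ i ∈ Finset.range n,
        C (f.coeff (Finsupp.single s i + Finsupp.single s.rev j)) * X ^ i := by
  have hrow (j : ℕ) : ∑ i ∈ Finset.range n,
      C (f.coeff (Finsupp.single s i + Finsupp.single s.rev j)) * X ^ i =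
        (bivariateEquiv s f).coeff j := by
    simp_rw [← coeff_coeff_bivariateEquiv]
    exact (as_sum_range_C_mul_X_pow' _
      ((natDegree_coeff_bivariateEquiv_le s f j).trans_lt hn)).symm
  simp_rw [hrow, aeval_X_dvd_iff]
  refine ⟨fun h j _ => h j, fun h j => ?_⟩
  by_cases hj : j < m
  · exact h j hj
  · rw [coeff_eq_zero_of_natDegree_lt ((natDegree_bivariateEquiv_le s f).trans_lt
      (hm.trans_le (not_lt.mp hj)))]
    exact dvd_zero p

end CommSemiring

variable {R : Type*} [CommRing R]

theorem aeval_X_dvd_of_dvd_sub_mul [Nontrivial R] (s : Fin 2) {g h : R[X]} (hh : h.Monic)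
    {f b : MvPolynomial (Fin 2) R} (hf : degreeOf s.rev f < h.natDegree)
    (hd : aeval (MvPolynomial.X s) g ∣ f - b * aeval (MvPolynomial.X s.rev) h) :
    aeval (MvPolynomial.X s) g ∣ f := by
  rw [← map_dvd_iff (bivariateEquiv s), map_sub, map_mul, bivariateEquiv_aeval_X,
    bivariateEquiv_aeval_X_rev] at hd
  rw [← map_dvd_iff (bivariateEquiv s), bivariateEquiv_aeval_X]
  refine C_dvd_of_C_dvd_sub_mul_monic (hh.map C) ?_ hd
  rw [hh.natDegree_map]
  exact (natDegree_bivariateEquiv_le s f).trans_lt hf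

theorem aeval_X_mul_aeval_X_rev_dvd [IsDomain R] (s : Fin 2) {g₁ g₂ : R[X]} (hg₁ : g₁ ≠ 0)
    (hg₂ : g₂.Monic) {f : MvPolynomial (Fin 2) R} (h₁ : aeval (MvPolynomial.X s) g₁ ∣ f)
    (h₂ : aeval (MvPolynomial.X s.rev) g₂ ∣ f) :
    aeval (MvPolynomial.X s) g₁ * aeval (MvPolynomial.X s.rev) g₂ ∣ f := by
  obtain ⟨c, rfl⟩ := h₁
  refine mul_dvd_mul_left _ ?_
  rw [← map_dvd_iff (bivariateEquiv s), map_mul, bivariateEquiv_aeval_X,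
    bivariateEquiv_aeval_X_rev] at h₂
  rw [← map_dvd_iff (bivariateEquiv s), bivariateEquiv_aeval_X_rev]
  exact (hg₂.map C).dvd_of_dvd_C_mul hg₁ h₂

theorem mem_span_mul_sup_span_pair_iff [IsDomain R] (s : Fin 2) {g₁ g₂ h₁ h₂ : R[X]}
    (hg₁ : g₁ ≠ 0) (hg₂ : g₂.Monic) (hh₁ : h₁.Monic) (hh₂ : h₂.Monic) (hgh₁ : g₁ ∣ h₁)
    (hgh₂ : g₂ ∣ h₂) {f : MvPolynomial (Fin 2) R} (hf₁ : degreeOf s f < h₁.natDegree)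
    (hf₂ : degreeOf s.rev f < h₂.natDegree) :
    f ∈ Ideal.span {aeval (MvPolynomial.X s) g₁ * aeval (MvPolynomial.X s.rev) g₂} ⊔
        Ideal.span {aeval (MvPolynomial.X s) h₁, aeval (MvPolynomial.X s.rev) h₂} ↔
      aeval (MvPolynomial.X s) g₁ ∣ f ∧ aeval (MvPolynomial.X s.rev) g₂ ∣ f := by
  rw [Ideal.mem_span_singleton_sup]
  constructor
  · rintro ⟨a, b, hb, rfl⟩
    obtain ⟨b₁, b₂, rfl⟩ := Ideal.mem_span_pair.mp hb
    constructor
    · refine aeval_X_dvd_of_dvd_sub_mul s hh₂ hf₂ (b := b₂) ?_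
      rw [add_sub_assoc, add_sub_cancel_right]
      exact dvd_add (dvd_mul_of_dvd_right (dvd_mul_right _ _) _)
        (dvd_mul_of_dvd_right (_root_.map_dvd _ hgh₁) _)
    · refine aeval_X_dvd_of_dvd_sub_mul s.rev hh₁ (by rwa [Fin.rev_rev]) (b := b₁) ?_
      rw [Fin.rev_rev, add_sub_assoc, add_sub_cancel_left]
      exact dvd_add (dvd_mul_of_dvd_right (dvd_mul_left _ _) _)
        (dvd_mul_of_dvd_right (_root_.map_dvd _ hgh₂) _)
  · rintro ⟨h₁, h₂⟩
    obtain ⟨c, rfl⟩ := aeval_X_mul_aeval_X_rev_dvd s hg₁ hg₂ h₁ h₂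
    exact ⟨c, 0, Ideal.zero_mem _, by ring⟩

end Polynomial.Bivariate

theorem stmt_5_general (F : Type) [Field F]
    (n₁ n₂ k₁ k₂ : ℕ)
    (hdvd₁ : (Polynomial.X - 1) ^ k₁ ∣ (Polynomial.X ^ n₁ - 1 : Polynomial F))
    (hdvd₂ : (Polynomial.X - 1) ^ k₂ ∣ (Polynomial.X ^ n₂ - 1 : Polynomial F))
    (I : Ideal (MvPolynomial (Fin 2) F))
    (hI : I = Ideal.span {X 0 ^ n₁ - 1, X 1 ^ n₂ - 1})
    (C : Ideal (MvPolynomial (Fin 2) F ⧸ I))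
    (hC : C = Ideal.span {Ideal.Quotient.mk I ((X 0 - 1) ^ k₁ * (X 1 - 1) ^ k₂)})
    (Ix : Ideal (Polynomial F)) (hIx : Ix = Ideal.span {Polynomial.X ^ n₁ - 1})
    (Cx : Ideal (Polynomial F ⧸ Ix))
    (hCx : Cx = Ideal.span {Ideal.Quotient.mk Ix ((Polynomial.X - 1) ^ k₁)})
    (Iy : Ideal (Polynomial F)) (hIy : Iy = Ideal.span {Polynomial.X ^ n₂ - 1})
    (Cy : Ideal (Polynomial F ⧸ Iy))
    (hCy : Cy = Ideal.span {Ideal.Quotient.mk Iy ((Polynomial.X - 1) ^ k₂)})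
    (f : MvPolynomial (Fin 2) F)
    (hf₁ : degreeOf 0 f < n₁) (hf₂ : degreeOf 1 f < n₂) :
    Ideal.Quotient.mk I f ∈ C ↔
      ((∀ j < n₂, Ideal.Quotient.mk Ix
          (∑ i ∈ Finset.range n₁,
            Polynomial.C (coeff (Finsupp.single 0 i + Finsupp.single 1 j) f) *
              Polynomial.X ^ i) ∈ Cx) ∧
       (∀ i < n₁, Ideal.Quotient.mk Iy
          (∑ j ∈ Finset.range n₂,
            Polynomial.C (coeff (Finsupp.single 0 i + Finsupp.single 1 j) f) *
              Polynomial.X ^ j) ∈ Cy)) := by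
  subst hI hC hIx hCx hIy hCy
  have hmonic (k : ℕ) : ((Polynomial.X - 1) ^ k : Polynomial F).Monic := by
    simpa using (Polynomial.monic_X_sub_C (1 : F)).pow k
  have hmod {n : ℕ} (hn : 0 < n) : (Polynomial.X ^ n - 1 : Polynomial F).Monic ∧
      (Polynomial.X ^ n - 1 : Polynomial F).natDegree = n :=
    ⟨Polynomial.leadingCoeff_X_pow_sub_one hn,
      by simpa using Polynomial.natDegree_X_pow_sub_C (n := n) (r := (1 : F))⟩
  obtain ⟨hmon₁, hdeg₁⟩ := hmod (Nat.zero_lt_of_lt hf₁)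
  obtain ⟨hmon₂, hdeg₂⟩ := hmod (Nat.zero_lt_of_lt hf₂)
  have hcode := Polynomial.Bivariate.mem_span_mul_sup_span_pair_iff 0 (hmonic k₁).ne_zero
    (hmonic k₂) hmon₁ hmon₂ hdvd₁ hdvd₂ (by rwa [hdeg₁]) (by rwa [hdeg₂])
  have hrows := Polynomial.Bivariate.aeval_X_dvd_iff_of_degreeOf_lt 0
    ((Polynomial.X - 1) ^ k₁) hf₁ hf₂
  have hcols := Polynomial.Bivariate.aeval_X_dvd_iff_of_degreeOf_lt 1
    ((Polynomial.X - 1) ^ k₂) hf₂ hf₁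
  simp only [map_pow, map_sub, Polynomial.aeval_X, map_one] at hcode hrows hcols
  rw [Ideal.Quotient.mk_mem_span_singleton_mk_iff]
  simp only [Ideal.Quotient.mk_mem_span_singleton_mk_iff_dvd hdvd₁,
    Ideal.Quotient.mk_mem_span_singleton_mk_iff_dvd hdvd₂]
  refine hcode.trans (and_congr hrows (hcols.trans ?_))
  simp_rw [add_comm (Finsupp.single (1 : Fin 2) _)]
  rfl

/-- The two-variable monomial-like code `⟨(x−1)^{k₁}(y−1)^{k₂}⟩ ⊆ F_q[x,y]/⟨x^{n₁}−1, y^{n₂}−1⟩`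
is the product code `C_x ⊗ C_y`: a (degree-bounded) representative `f` gives a codeword iff
all its rows lie in `C_x = ⟨(x−1)^{k₁}⟩` and all its columns lie in `C_y = ⟨(y−1)^{k₂}⟩`. -/
theorem stmt_5 (F : Type) [Field F] [Fintype F]
    (n₁ n₂ k₁ k₂ : ℕ) (hn₁ : 0 < n₁) (hn₂ : 0 < n₂) (hk₁ : 0 < k₁) (hk₂ : 0 < k₂)
    (hdvd₁ : (Polynomial.X - 1) ^ k₁ ∣ (Polynomial.X ^ n₁ - 1 : Polynomial F))
    (hdvd₂ : (Polynomial.X - 1) ^ k₂ ∣ (Polynomial.X ^ n₂ - 1 : Polynomial F))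
    (I : Ideal (MvPolynomial (Fin 2) F))
    (hI : I = Ideal.span {X 0 ^ n₁ - 1, X 1 ^ n₂ - 1})
    (C : Ideal (MvPolynomial (Fin 2) F ⧸ I))
    (hC : C = Ideal.span {Ideal.Quotient.mk I ((X 0 - 1) ^ k₁ * (X 1 - 1) ^ k₂)})
    (Ix : Ideal (Polynomial F)) (hIx : Ix = Ideal.span {Polynomial.X ^ n₁ - 1})
    (Cx : Ideal (Polynomial F ⧸ Ix))
    (hCx : Cx = Ideal.span {Ideal.Quotient.mk Ix ((Polynomial.X - 1) ^ k₁)})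
    (Iy : Ideal (Polynomial F)) (hIy : Iy = Ideal.span {Polynomial.X ^ n₂ - 1})
    (Cy : Ideal (Polynomial F ⧸ Iy))
    (hCy : Cy = Ideal.span {Ideal.Quotient.mk Iy ((Polynomial.X - 1) ^ k₂)})
    (f : MvPolynomial (Fin 2) F)
    (hf₁ : degreeOf 0 f < n₁) (hf₂ : degreeOf 1 f < n₂) :
    Ideal.Quotient.mk I f ∈ C ↔
      ((∀ j < n₂, Ideal.Quotient.mk Ix
          (∑ i ∈ Finset.range n₁,
            Polynomial.C (coeff (Finsupp.single 0 i + Finsupp.single 1 j) f) *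
              Polynomial.X ^ i) ∈ Cx) ∧
       (∀ i < n₁, Ideal.Quotient.mk Iy
          (∑ j ∈ Finset.range n₂,
            Polynomial.C (coeff (Finsupp.single 0 i + Finsupp.single 1 j) f) *
              Polynomial.X ^ j) ∈ Cy)) :=
  stmt_5_general F n₁ n₂ k₁ k₂ hdvd₁ hdvd₂ I hI C hC Ix hIx Cx hCx Iy hIy Cy hCy f hf₁ hf₂
end

section
/- Let p be a prime, F_q a finite field of characteristic p, s_1,…,s_n positive integers, and N_1,…,N_n integers with 0 ≤ N_j ≤ p^{s_j} for all j. Let C = ⟨(x_1 − 1)^{N_1}···(x_n − 1)^{N_n}⟩ ⊆ R = F_q[x_1,…,x_n]/⟨x_1^{p^{s_1}} − 1, …, x_n^{p^{s_n}} − 1⟩. Then the Euclidean dual code of C is C^⊥ = ⟨(x_1 − 1)^{p^{s_1} − N_1}, …, (x_n − 1)^{p^{s_n} − N_n}⟩. -/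
/-!
Let `I = ⟨x_j ^ q_j - 1⟩`, so that `R[x] ⧸ I` is the group algebra of `∏ ℤ/q_j`. There `trace`
(the sum of the coefficients at exponents divisible by `q`) is the coefficient of the identity,
and `invert` (`x_j ↦ x_j ^ (q_j - 1)`) is `x ↦ x⁻¹`. For reduced `f`, `g` the dot product is
`trace (f * invert g)`, and the trace form is nondegenerate: `u ∈ I` iff `trace (t * u) = 0`
for all `t`. Hence `g` is orthogonal to `⟨h⟩` iff `h * invert g ∈ I`; for
`h = ∏ (x_j - 1) ^ N_j` this is equivalent to `h * g ∈ I`, since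
`invert (x_j - 1) = -x_j⁻¹ (x_j - 1)`.

In characteristic `p` with `q_j = p ^ s_j` we have `x_j ^ q_j - 1 = (x_j - 1) ^ q_j`, and the
substitution `x_j ↦ x_j + 1` turns all ideals involved into monomial ideals, in which the
annihilator of `∏ (x_j - 1) ^ N_j` modulo `I` is visibly `⟨(x_j - 1) ^ (q_j - N_j)⟩`.
-/

open MvPolynomial

namespace AbelianCode

theorem dvd_add_mul_pred_iff {q m k : ℕ} (hm : m < q) (hk : k < q) :
    q ∣ m + k * (q - 1) ↔ m = k := by
  have hkq : k * (q - 1) + k = k * q := by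
    rw [← Nat.mul_add_one, Nat.sub_add_cancel (by omega : 1 ≤ q)]
  constructor
  · intro h
    have h1 : m + k * (q - 1) + k ≡ 0 + k [MOD q] := (Nat.modEq_zero_iff_dvd.2 h).add_right k
    rw [add_assoc, hkq, zero_add] at h1
    exact Nat.ModEq.eq_of_lt_of_lt (by simpa [Nat.ModEq] using h1) hm hk
  · rintro rfl
    exact ⟨m, by rw [add_comm, hkq, mul_comm]⟩

theorem pred_mul_pred_modEq_one {q : ℕ} (hq : 0 < q) : (q - 1) * (q - 1) ≡ 1 [MOD q] :=
  (ZMod.natCast_eq_natCast_iff _ _ _).mp <| by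
    rw [Nat.cast_mul, Nat.cast_sub hq, ZMod.natCast_self]
    simp

variable {R σ : Type*} [CommRing R] (q : σ → ℕ)

noncomputable def cyclicIdeal : Ideal (MvPolynomial σ R) :=
  Ideal.span (Set.range fun j => X j ^ q j - 1)

def IsReducedMod (f : MvPolynomial σ R) : Prop :=
  ∀ m ∈ f.support, ∀ j, m j < q j

theorem isReducedMod_iff_degreeOf_lt (hq : ∀ j, 0 < q j) (f : MvPolynomial σ R) :
    IsReducedMod q f ↔ ∀ j, degreeOf j f < q j := by
  simp only [degreeOf_lt_iff (hq _)]
  exact ⟨fun hf j m hm => hf m hm j, fun hf m hm j => hf j m hm⟩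

theorem isReducedMod_monomial {m : σ →₀ ℕ} (hm : ∀ j, m j < q j) (c : R) :
    IsReducedMod q (monomial m c) := fun k hk => by
  rwa [Finset.mem_singleton.mp (support_monomial_subset hk)]

theorem mk_X_pow_eq_one (j : σ) :
    Ideal.Quotient.mk (cyclicIdeal q) (X j : MvPolynomial σ R) ^ q j = 1 := by
  rw [← map_pow, ← map_one (Ideal.Quotient.mk _), Ideal.Quotient.mk_eq_mk_iff_sub_mem]
  exact Ideal.subset_span ⟨j, rfl⟩

theorem mk_X_pow_eq_of_modEq (j : σ) {a b : ℕ} (h : a ≡ b [MOD q j]) :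
    Ideal.Quotient.mk (cyclicIdeal q) (X j ^ a : MvPolynomial σ R)
      = Ideal.Quotient.mk (cyclicIdeal q) (X j ^ b) := by
  rw [map_pow, map_pow, pow_eq_pow_mod a (mk_X_pow_eq_one q j), h,
    ← pow_eq_pow_mod b (mk_X_pow_eq_one q j)]

theorem isUnit_mk_X (hq : ∀ j, 0 < q j) (j : σ) :
    IsUnit (Ideal.Quotient.mk (cyclicIdeal q) (X j : MvPolynomial σ R)) :=
  IsUnit.of_pow_eq_one (mk_X_pow_eq_one q j) (hq j).ne'

theorem exists_isReducedMod_sub_mem [Fintype σ] (hq : ∀ j, 0 < q j) (u : MvPolynomial σ R) :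
    ∃ f, IsReducedMod q f ∧ u - f ∈ cyclicIdeal q := by
  classical
  induction u using MvPolynomial.induction_on' with
  | monomial m c =>
    refine ⟨monomial (Finsupp.equivFunOnFinite.symm fun j => m j % q j) c, ?_, ?_⟩
    · exact isReducedMod_monomial q (fun j => Nat.mod_lt _ (hq j)) c
    · rw [← Ideal.Quotient.mk_eq_mk_iff_sub_mem, monomial_eq, monomial_eq,
        Finsupp.prod_fintype _ _ (fun _ => pow_zero _),
        Finsupp.prod_fintype _ _ (fun _ => pow_zero _),
        map_mul, map_mul, map_prod, map_prod]
      congr 1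
      refine Finset.prod_congr rfl fun j _ => mk_X_pow_eq_of_modEq q j ?_
      exact (Nat.mod_modEq _ _).symm
  | add a b ha hb =>
    obtain ⟨f, hf, haf⟩ := ha
    obtain ⟨g, hg, hbg⟩ := hb
    refine ⟨f + g, fun m hm => ?_, by convert add_mem haf hbg using 1; ring⟩
    rcases Finset.mem_union.mp (support_add hm) with hm | hm
    exacts [hf m hm, hg m hm]

open Classical in
noncomputable def trace : MvPolynomial σ R →ₗ[R] R :=
  (basisMonomials σ R).constr R fun m => if ∀ j, q j ∣ m j then 1 else 0

open Classical in
theorem trace_monomial (m : σ →₀ ℕ) (c : R) :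
    trace q (monomial m c) = if ∀ j, q j ∣ m j then c else 0 := by
  rw [show monomial m c = c • basisMonomials σ R m by simp [smul_monomial], map_smul, trace,
    Module.Basis.constr_basis, smul_ite, smul_eq_mul, mul_one, smul_zero]

theorem trace_mul_X_pow (t : MvPolynomial σ R) (j : σ) :
    trace q (t * X j ^ q j) = trace q t := by
  classical
  induction t using MvPolynomial.induction_on' with
  | monomial m c =>
    rw [X_pow_eq_monomial, monomial_mul, mul_one, trace_monomial, trace_monomial]
    congr 1
    refine propext (forall_congr' fun i => ?_)
    rcases eq_or_ne i j with rfl | hij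
    · simp [Nat.dvd_add_self_right]
    · simp [Finsupp.single_eq_of_ne hij]
  | add a b ha hb => rw [add_mul, map_add, map_add, ha, hb]

theorem trace_mul_eq_zero_of_mem {u : MvPolynomial σ R} (hu : u ∈ cyclicIdeal q)
    (t : MvPolynomial σ R) : trace q (t * u) = 0 := by
  induction hu using Submodule.span_induction generalizing t with
  | mem x hx =>
    obtain ⟨j, rfl⟩ := hx
    rw [mul_sub, mul_one, map_sub, trace_mul_X_pow, sub_self]
  | zero => rw [mul_zero, map_zero]
  | add x y _ _ hx hy => rw [mul_add, map_add, hx, hy, add_zero]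
  | smul a x _ hx => rw [smul_eq_mul, ← mul_assoc, hx]

noncomputable def invert : MvPolynomial σ R →ₐ[R] MvPolynomial σ R :=
  aeval fun j => X j ^ (q j - 1)

theorem invert_monomial [Fintype σ] (k : σ →₀ ℕ) (c : R) :
    invert q (monomial k c)
      = monomial (Finsupp.equivFunOnFinite.symm fun j => k j * (q j - 1)) c := by
  rw [invert, aeval_monomial, monomial_eq, Finsupp.prod_fintype _ _ (fun _ => pow_zero _),
    Finsupp.prod_fintype _ _ (fun _ => pow_zero _), algebraMap_eq]
  simp_rw [← pow_mul, mul_comm]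
  rfl

open Classical in
theorem trace_monomial_mul_invert_monomial [Fintype σ] {m k : σ →₀ ℕ}
    (hm : ∀ j, m j < q j) (hk : ∀ j, k j < q j) (a b : R) :
    trace q (monomial m a * invert q (monomial k b)) = if m = k then a * b else 0 := by
  rw [invert_monomial, monomial_mul, trace_monomial]
  congr 1
  simp only [Finsupp.ext_iff, Finsupp.add_apply, Finsupp.coe_equivFunOnFinite_symm]
  exact propext (forall_congr' fun j => dvd_add_mul_pred_iff (hm j) (hk j))

theorem sum_coeff_mul_coeff_eq_trace [Fintype σ] {f g : MvPolynomial σ R}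
    (hf : IsReducedMod q f) (hg : IsReducedMod q g) :
    ∑ m ∈ f.support, coeff m f * coeff m g = trace q (f * invert q g) := by
  classical
  conv_rhs => rw [f.as_sum, g.as_sum, map_sum, Finset.sum_mul_sum, map_sum]
  refine Finset.sum_congr rfl fun m hm => ?_
  rw [map_sum, Finset.sum_congr rfl fun k hk =>
    trace_monomial_mul_invert_monomial q (hf m hm) (hg k hk) _ _]
  simp only [Finset.sum_ite_eq]
  split_ifs with hmg
  · rfl
  · rw [notMem_support_iff.mp hmg, mul_zero]

theorem mem_cyclicIdeal_iff_forall_trace_mul [Fintype σ] (hq : ∀ j, 0 < q j)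
    {u : MvPolynomial σ R} : u ∈ cyclicIdeal q ↔ ∀ t, trace q (t * u) = 0 := by
  classical
  refine ⟨fun hu t => trace_mul_eq_zero_of_mem q hu t, fun h => ?_⟩
  obtain ⟨f, hf, huf⟩ := exists_isReducedMod_sub_mem q hq u
  suffices f = 0 by rwa [this, sub_zero] at huf
  ext r
  by_cases hr : r ∈ f.support
  · have hmono : IsReducedMod q (monomial r (1 : R)) := isReducedMod_monomial q (hf r hr) 1
    calc coeff r f = ∑ m ∈ f.support, coeff m f * coeff m (monomial r (1 : R)) := by
          simp [coeff_monomial, hr]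
      _ = trace q (invert q (monomial r 1) * u)
            - trace q (invert q (monomial r 1) * (u - f)) := by
          rw [sum_coeff_mul_coeff_eq_trace q hf hmono, ← map_sub, ← mul_sub, sub_sub_cancel,
            mul_comm]
      _ = coeff r 0 := by rw [h, trace_mul_eq_zero_of_mem q huf, sub_zero, coeff_zero]
  · rw [notMem_support_iff.mp hr, coeff_zero]

theorem sum_coeff_mul_coeff_eq_trace_of_sub_mem [Fintype σ] {f g t h : MvPolynomial σ R}
    (hf : IsReducedMod q f) (hg : IsReducedMod q g) (hth : t * h - f ∈ cyclicIdeal q) :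
    ∑ m ∈ f.support, coeff m f * coeff m g = trace q (t * (h * invert q g)) := by
  rw [sum_coeff_mul_coeff_eq_trace q hf hg,
    show t * (h * invert q g) = f * invert q g + invert q g * (t * h - f) by ring,
    map_add, trace_mul_eq_zero_of_mem q hth, add_zero]

theorem forall_sum_coeff_mul_coeff_eq_zero_iff [Fintype σ] (hq : ∀ j, 0 < q j)
    {g : MvPolynomial σ R} (hg : IsReducedMod q g) (h : MvPolynomial σ R) :
    (∀ f, IsReducedMod q f →
        Ideal.Quotient.mk (cyclicIdeal q) f ∈ Ideal.span {Ideal.Quotient.mk (cyclicIdeal q) h} →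
          ∑ m ∈ f.support, coeff m f * coeff m g = 0)
      ↔ h * invert q g ∈ cyclicIdeal q := by
  rw [mem_cyclicIdeal_iff_forall_trace_mul q hq]
  constructor
  · intro horth t
    obtain ⟨f, hf, hth⟩ := exists_isReducedMod_sub_mem q hq (t * h)
    have hfC : Ideal.Quotient.mk (cyclicIdeal q) f ∈ Ideal.span {Ideal.Quotient.mk _ h} := by
      rw [← (Ideal.Quotient.mk_eq_mk_iff_sub_mem _ _).mpr hth, map_mul]
      exact Ideal.mul_mem_left _ _ (Ideal.mem_span_singleton_self _)
    rw [← sum_coeff_mul_coeff_eq_trace_of_sub_mem q hf hg hth]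
    exact horth f hf hfC
  · intro htrace f hf hfC
    obtain ⟨a, ha⟩ := Ideal.mem_span_singleton'.mp hfC
    obtain ⟨t, rfl⟩ := Ideal.Quotient.mk_surjective a
    rw [sum_coeff_mul_coeff_eq_trace_of_sub_mem q hf hg
      ((Ideal.Quotient.mk_eq_mk_iff_sub_mem _ _).mp (by rw [map_mul, ha])), htrace]

theorem invert_mem {u : MvPolynomial σ R} (hu : u ∈ cyclicIdeal q) :
    invert q u ∈ cyclicIdeal q := by
  refine (Ideal.span_le (I := (cyclicIdeal q).comap (invert q)).mpr ?_) hu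
  rintro _ ⟨j, rfl⟩
  rw [SetLike.mem_coe, Ideal.mem_comap, ← Ideal.Quotient.eq_zero_iff_mem, map_sub, map_pow,
    invert, aeval_X, ← pow_mul, mul_comm, pow_mul, map_sub, map_pow, map_pow, mk_X_pow_eq_one,
    one_pow, map_one, map_one, sub_self]

theorem mk_invert_invert (hq : ∀ j, 0 < q j) (u : MvPolynomial σ R) :
    Ideal.Quotient.mk (cyclicIdeal q) (invert q (invert q u)) = Ideal.Quotient.mk _ u := by
  suffices ((Ideal.Quotient.mkₐ R (cyclicIdeal q)).comp ((invert q).comp (invert q)))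
      = Ideal.Quotient.mkₐ R (cyclicIdeal q) from congrArg (fun φ => φ u) this
  refine MvPolynomial.algHom_ext fun j => ?_
  simp only [AlgHom.comp_apply, Ideal.Quotient.mkₐ_eq_mk, invert, aeval_X, map_pow, ← pow_mul]
  rw [← map_pow, mk_X_pow_eq_of_modEq q j (pred_mul_pred_modEq_one (hq j)), pow_one]

theorem mk_invert_X_sub_one (hq : ∀ j, 0 < q j) (j : σ) :
    Ideal.Quotient.mk (cyclicIdeal q) (invert q (X j - 1 : MvPolynomial σ R))
      = -Ideal.Quotient.mk _ (X j) ^ (q j - 1) * Ideal.Quotient.mk _ (X j - 1) := by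
  have hx := mk_X_pow_eq_one (R := R) q j
  obtain ⟨r, hr⟩ : ∃ r, q j = r + 1 := ⟨q j - 1, by have := hq j; omega⟩
  rw [hr, pow_succ] at hx
  rw [invert, map_sub, aeval_X, map_one, hr, Nat.add_sub_cancel, map_sub, map_sub, map_pow,
    map_one]
  linear_combination hx

theorem exists_isUnit_mk_invert_prod [Fintype σ] (hq : ∀ j, 0 < q j) (N : σ → ℕ) :
    ∃ v, IsUnit v ∧ Ideal.Quotient.mk (cyclicIdeal q) (invert q (∏ j, (X j - 1) ^ N j))
      = v * Ideal.Quotient.mk _ (∏ j, (X j - 1 : MvPolynomial σ R) ^ N j) := by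
  refine ⟨∏ j, (-Ideal.Quotient.mk (cyclicIdeal q) (X j) ^ (q j - 1)) ^ N j, ?_, ?_⟩
  · exact IsUnit.prod_univ_iff.mpr fun j => ((isUnit_mk_X q hq j).pow _).neg.pow _
  · simp only [map_prod, map_pow, mk_invert_X_sub_one q hq, mul_pow, Finset.prod_mul_distrib]

theorem mul_invert_mem_iff (hq : ∀ j, 0 < q j) {h : MvPolynomial σ R}
    (hh : ∃ v, IsUnit v ∧ Ideal.Quotient.mk (cyclicIdeal q) (invert q h)
      = v * Ideal.Quotient.mk _ h) (g : MvPolynomial σ R) :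
    h * invert q g ∈ cyclicIdeal q ↔ h * g ∈ cyclicIdeal q := by
  obtain ⟨v, hv, hvh⟩ := hh
  have key : ∀ g', h * g' ∈ cyclicIdeal q → h * invert q g' ∈ cyclicIdeal q := by
    intro g' hg'
    have := invert_mem q hg'
    rw [← Ideal.Quotient.eq_zero_iff_mem, map_mul, map_mul, hvh, mul_assoc,
      hv.mul_right_eq_zero, ← map_mul] at this
    exact Ideal.Quotient.eq_zero_iff_mem.mp this
  refine ⟨fun hg => ?_, key g⟩
  have := key _ hg
  rwa [← Ideal.Quotient.eq_zero_iff_mem, map_mul, mk_invert_invert q hq, ← map_mul,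
    Ideal.Quotient.eq_zero_iff_mem] at this

theorem mem_span_X_pow_iff (e : σ → ℕ) (t : MvPolynomial σ R) :
    t ∈ Ideal.span (Set.range fun j => X j ^ e j) ↔ ∀ m ∈ t.support, ∃ j, e j ≤ m j := by
  classical
  have hspan : (Set.range fun j => (X j ^ e j : MvPolynomial σ R))
      = (fun s => monomial s (1 : R)) '' Set.range fun j => Finsupp.single j (e j) := by
    rw [← Set.range_comp]
    simp only [Function.comp_def, X_pow_eq_monomial]
  simp [hspan, mem_ideal_span_monomial_image, Finsupp.single_le_iff]

theorem monomial_mul_mem_span_X_pow_iff (a : σ →₀ ℕ) (e : σ → ℕ) (t : MvPolynomial σ R) :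
    monomial a 1 * t ∈ Ideal.span (Set.range fun j => X j ^ e j)
      ↔ t ∈ Ideal.span (Set.range fun j => X j ^ (e j - a j)) := by
  rw [mem_span_X_pow_iff, mem_span_X_pow_iff]
  constructor
  · intro H m hm
    obtain ⟨j, hj⟩ := H (a + m) <| by
      rw [mem_support_iff, coeff_monomial_mul, one_mul]
      exact mem_support_iff.mp hm
    exact ⟨j, by rw [Finsupp.add_apply] at hj; omega⟩
  · intro H x hx
    rw [mem_support_iff, coeff_monomial_mul'] at hx
    split_ifs at hx with hax
    · obtain ⟨j, hj⟩ := H (x - a) (by rwa [mem_support_iff, ← one_mul (coeff _ t)])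
      exact ⟨j, by rw [Finsupp.tsub_apply] at hj; have := hax j; omega⟩
    · exact absurd rfl hx

noncomputable def shift : MvPolynomial σ R ≃ₐ[R] MvPolynomial σ R :=
  AlgEquiv.ofAlgHom (aeval fun j => X j + 1) (aeval fun j => X j - 1)
    (MvPolynomial.algHom_ext fun j => by simp) (MvPolynomial.algHom_ext fun j => by simp)

theorem shift_X_sub_one_pow (j : σ) (k : ℕ) :
    shift ((X j - 1 : MvPolynomial σ R) ^ k) = X j ^ k := by
  simp [shift]

theorem mem_span_iff_shift_mem {S : Set (MvPolynomial σ R)} {t : MvPolynomial σ R} :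
    t ∈ Ideal.span S ↔ shift t ∈ Ideal.span (shift '' S) := by
  rw [← Ideal.map_span]
  exact (Ideal.apply_mem_of_equiv_iff (f := (shift : _ ≃ₐ[R] _).toRingEquiv)).symm

theorem prod_X_sub_one_pow_mul_mem_span_iff [Fintype σ] (a e : σ → ℕ) (t : MvPolynomial σ R) :
    (∏ j, (X j - 1) ^ a j) * t ∈ Ideal.span (Set.range fun j => (X j - 1) ^ e j)
      ↔ t ∈ Ideal.span (Set.range fun j => (X j - 1) ^ (e j - a j)) := by
  have hprod : shift (∏ j, (X j - 1 : MvPolynomial σ R) ^ a j)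
      = monomial (Finsupp.equivFunOnFinite.symm a) 1 := by
    rw [map_prod, monomial_eq, Finsupp.prod_fintype _ _ (fun _ => pow_zero _), C_1, one_mul]
    simp_rw [shift_X_sub_one_pow]
    rfl
  rw [mem_span_iff_shift_mem, mem_span_iff_shift_mem (t := t), ← Set.range_comp,
    ← Set.range_comp, map_mul, hprod]
  simp only [Function.comp_def, shift_X_sub_one_pow]
  exact monomial_mul_mem_span_X_pow_iff _ e _

theorem cyclicIdeal_eq_span_X_sub_one_pow (p : ℕ) [ExpChar R p] (s : σ → ℕ) :
    cyclicIdeal (fun j => p ^ s j)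
      = Ideal.span (Set.range fun j => (X j - 1 : MvPolynomial σ R) ^ p ^ s j) := by
  simp only [cyclicIdeal, sub_pow_expChar_pow, one_pow]

theorem mk_mem_span_mk_X_sub_one_pow_iff [Fintype σ] (p : ℕ) [ExpChar R p] (s N : σ → ℕ)
    (g : MvPolynomial σ R) :
    Ideal.Quotient.mk (cyclicIdeal fun j => p ^ s j) g
        ∈ Ideal.span (Set.range fun j =>
          Ideal.Quotient.mk (cyclicIdeal fun j => p ^ s j) ((X j - 1) ^ (p ^ s j - N j)))
      ↔ (∏ j, (X j - 1) ^ N j) * g ∈ cyclicIdeal fun j => p ^ s j := by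
  have hle : cyclicIdeal (fun j => p ^ s j)
      ≤ Ideal.span (Set.range fun j => (X j - 1 : MvPolynomial σ R) ^ (p ^ s j - N j)) := by
    rw [cyclicIdeal_eq_span_X_sub_one_pow, Ideal.span_le]
    rintro _ ⟨j, rfl⟩
    exact Ideal.mem_of_dvd _ (pow_dvd_pow _ (Nat.sub_le _ _)) (Ideal.subset_span ⟨j, rfl⟩)
  rw [Set.range_comp', ← Ideal.map_span, Ideal.mem_quotient_iff_mem hle,
    cyclicIdeal_eq_span_X_sub_one_pow, prod_X_sub_one_pow_mul_mem_span_iff]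

end AbelianCode

theorem stmt_8_general (p : ℕ) (hp : p.Prime) (F : Type) [Field F] [CharP F p]
    (n : ℕ) (s N : Fin n → ℕ)
    (I : Ideal (MvPolynomial (Fin n) F))
    (hI : I = Ideal.span (Set.range fun j : Fin n => X j ^ p ^ s j - 1))
    (C : Ideal (MvPolynomial (Fin n) F ⧸ I))
    (hC : C = Ideal.span {Ideal.Quotient.mk I (∏ j : Fin n, (X j - 1) ^ N j)})
    (D : Ideal (MvPolynomial (Fin n) F ⧸ I))
    (hD : D = Ideal.span
      (Set.range fun j : Fin n => Ideal.Quotient.mk I ((X j - 1) ^ (p ^ s j - N j)))) :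
    ∀ g : MvPolynomial (Fin n) F, (∀ j, degreeOf j g < p ^ s j) →
      (Ideal.Quotient.mk I g ∈ D ↔
        ∀ f : MvPolynomial (Fin n) F, (∀ j, degreeOf j f < p ^ s j) →
          Ideal.Quotient.mk I f ∈ C →
            ∑ m ∈ f.support, coeff m f * coeff m g = 0) := by
  have : Fact p.Prime := ⟨hp⟩
  have hq : ∀ j, 0 < p ^ s j := fun j => pow_pos hp.pos _
  change I = AbelianCode.cyclicIdeal fun j => p ^ s j at hI
  subst hI hC hD
  intro g hg
  simp only [← AbelianCode.isReducedMod_iff_degreeOf_lt _ hq] at hg ⊢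
  rw [AbelianCode.mk_mem_span_mk_X_sub_one_pow_iff,
    ← AbelianCode.mul_invert_mem_iff _ hq (AbelianCode.exists_isUnit_mk_invert_prod _ hq N),
    AbelianCode.forall_sum_coeff_mul_coeff_eq_zero_iff _ hq hg]

/-- The Euclidean dual of the monomial-like code
`C = ⟨(x₁−1)^{N₁}⋯(x_n−1)^{N_n}⟩ ⊆ F_q[x]/⟨x_j^{p^{s_j}}−1⟩` is
`C^⊥ = ⟨(x₁−1)^{p^{s₁}−N₁}, …, (x_n−1)^{p^{s_n}−N_n}⟩`. Elements of the quotient are identified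
with the coefficient vectors of their unique degree-bounded representatives, and the Euclidean
inner product of two such representatives `f`, `g` is `∑ m, f_m · g_m`. -/
theorem stmt_8 (p : ℕ) (hp : p.Prime) (F : Type) [Field F] [Fintype F] [CharP F p]
    (n : ℕ) (s N : Fin n → ℕ) (hs : ∀ j, 0 < s j) (hN : ∀ j, N j ≤ p ^ s j)
    (I : Ideal (MvPolynomial (Fin n) F))
    (hI : I = Ideal.span (Set.range fun j : Fin n => X j ^ p ^ s j - 1))
    (C : Ideal (MvPolynomial (Fin n) F ⧸ I))
    (hC : C = Ideal.span {Ideal.Quotient.mk I (∏ j : Fin n, (X j - 1) ^ N j)})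
    (D : Ideal (MvPolynomial (Fin n) F ⧸ I))
    (hD : D = Ideal.span
      (Set.range fun j : Fin n => Ideal.Quotient.mk I ((X j - 1) ^ (p ^ s j - N j)))) :
    ∀ g : MvPolynomial (Fin n) F, (∀ j, degreeOf j g < p ^ s j) →
      (Ideal.Quotient.mk I g ∈ D ↔
        ∀ f : MvPolynomial (Fin n) F, (∀ j, degreeOf j f < p ^ s j) →
          Ideal.Quotient.mk I f ∈ C →
            ∑ m ∈ f.support, coeff m f * coeff m g = 0) :=
  stmt_8_general p hp F n s N I hI C hC D hD
end

section
/- Let p be a prime, F_q a finite field of characteristic p, s_1,…,s_n positive integers, and N_1,…,N_n integers with 0 ≤ N_j ≤ p^{s_j} for all j. Then the ideal C = ⟨(x_1 − 1)^{N_1}···(x_n − 1)^{N_n}⟩ of R = F_q[x_1,…,x_n]/⟨x_1^{p^{s_1}} − 1, …, x_n^{p^{s_n}} − 1⟩, viewed as an F_q-vector space, has dimension dim_{F_q}(C) = (p^{s_1} − N_1)(p^{s_2} − N_2)···(p^{s_n} − N_n). -/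
/-! The substitution `xⱼ ↦ xⱼ - 1` is an automorphism of `F[x]` which, since
`(xⱼ - 1) ^ p ^ s = xⱼ ^ p ^ s - 1` in characteristic `p`, carries `⟨xⱼ ^ p ^ sⱼ⟩` onto
`⟨xⱼ ^ p ^ sⱼ - 1⟩` and `x ^ N` onto `∏ (xⱼ - 1) ^ Nⱼ`. So `C` is isomorphic to the ideal generated
by `x ^ N` in the truncated ring `F[x] / ⟨xⱼ ^ Mⱼ⟩`, `Mⱼ = p ^ sⱼ`. That ideal is the image of the
polynomials supported on the exponents `N ≤ a < M`, and reduction modulo a monomial ideal is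
injective on polynomials supported outside it, so its dimension is the number of such exponents. -/

namespace MvPolynomial

variable {σ R : Type*}

section CommSemiring

variable [CommSemiring R]

variable (R) in
noncomputable def truncationIdeal (M : σ → ℕ) : Ideal (MvPolynomial σ R) :=
  Ideal.span (Set.range fun j => X j ^ M j)

theorem mem_truncationIdeal_iff {M : σ → ℕ} {f : MvPolynomial σ R} :
    f ∈ truncationIdeal R M ↔ ∀ a ∈ f.support, ∃ j, M j ≤ a j := by
  have hgen : (Set.range fun j => (X j : MvPolynomial σ R) ^ M j) =
      (fun a => monomial a (1 : R)) '' Set.range fun j => Finsupp.single j (M j) := by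
    rw [← Set.range_comp]
    simp only [Function.comp_def, X_pow_eq_monomial]
  simp [truncationIdeal, hgen, mem_ideal_span_monomial_image, Finsupp.single_le_iff]

theorem disjoint_restrictSupport_truncationIdeal (M : σ → ℕ) :
    Disjoint (restrictSupport R {a | ∀ j, a j < M j})
      ((truncationIdeal R M).restrictScalars R) := by
  refine Submodule.disjoint_def.mpr fun f hf hfM => ?_
  rw [Submodule.restrictScalars_mem, mem_truncationIdeal_iff] at hfM
  refine support_eq_empty.mp (Finset.eq_empty_of_forall_notMem fun a ha => ?_)
  obtain ⟨j, hj⟩ := hfM a ha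
  exact hj.not_gt (hf ha j)

theorem prod_X_pow_eq_monomial_equivFunOnFinite_symm [Fintype σ] (N : σ → ℕ) :
    ∏ j, (X j : MvPolynomial σ R) ^ N j = monomial (Finsupp.equivFunOnFinite.symm N) 1 := by
  rw [monomial_eq, C_1, one_mul, Finsupp.prod_fintype _ _ fun _ => pow_zero _]
  rfl

end CommSemiring

section CommRing

variable [CommRing R]

theorem mk_monomial_eq_zero_of_le {M : σ → ℕ} {a : σ →₀ ℕ} (c : R) (h : ∃ j, M j ≤ a j) :
    Ideal.Quotient.mk (truncationIdeal R M) (monomial a c) = 0 :=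
  Ideal.Quotient.eq_zero_iff_mem.mpr <| mem_truncationIdeal_iff.mpr fun b hb => by
    rwa [Finset.mem_singleton.mp (support_monomial_subset hb)]

theorem restrictScalars_span_mk_monomial (M : σ → ℕ) (n : σ →₀ ℕ) :
    (Ideal.span {Ideal.Quotient.mk (truncationIdeal R M) (monomial n (1 : R))}).restrictScalars R =
      (restrictSupport R {a | n ≤ a ∧ ∀ j, a j < M j}).map
        (Ideal.Quotient.mkₐ R (truncationIdeal R M)).toLinearMap := by
  apply le_antisymm
  · intro x
    rw [Submodule.restrictScalars_mem, Ideal.mem_span_singleton']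
    rintro ⟨r, rfl⟩
    obtain ⟨f, rfl⟩ := Ideal.Quotient.mk_surjective r
    induction f using MvPolynomial.induction_on' with
    | add f g hf hg => rw [map_add, add_mul]; exact Submodule.add_mem _ hf hg
    | monomial u c =>
      rw [← map_mul, monomial_mul, mul_one]
      by_cases hlt : ∀ j, u j + n j < M j
      · exact ⟨_, by simpa using Or.inl hlt, rfl⟩
      · push Not at hlt
        rw [mk_monomial_eq_zero_of_le _ hlt]
        exact Submodule.zero_mem _
  · rw [Submodule.map_le_iff_le_comap, restrictSupport_eq_span, Submodule.span_le]
    rintro _ ⟨a, ⟨hna, -⟩, rfl⟩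
    have hsplit : monomial a (1 : R) = monomial (a - n) 1 * monomial n 1 := by
      rw [monomial_mul, mul_one, tsub_add_cancel_of_le hna]
    simp only [SetLike.mem_coe, Submodule.mem_comap, AlgHom.toLinearMap_apply,
      Ideal.Quotient.mkₐ_eq_mk, Submodule.restrictScalars_mem, hsplit, map_mul]
    exact Ideal.mul_mem_left _ _ (Ideal.mem_span_singleton_self _)

noncomputable def translateAlgEquiv (c : σ → R) : MvPolynomial σ R ≃ₐ[R] MvPolynomial σ R :=
  AlgEquiv.ofAlgHom (aeval fun j => X j - C (c j)) (aeval fun j => X j + C (c j))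
    (algHom_ext fun j => by simp) (algHom_ext fun j => by simp)

@[simp]
theorem translateAlgEquiv_X (c : σ → R) (j : σ) : translateAlgEquiv c (X j) = X j - C (c j) :=
  aeval_X _ j

theorem map_translateAlgEquiv_truncationIdeal (p : ℕ) [ExpChar R p] (c : σ → R) (k : σ → ℕ) :
    (truncationIdeal R fun j => p ^ k j).map (translateAlgEquiv c) =
      Ideal.span (Set.range fun j => X j ^ p ^ k j - C (c j) ^ p ^ k j) := by
  rw [truncationIdeal, Ideal.map_span, ← Set.range_comp]
  simp [Function.comp_def, sub_pow_expChar_pow]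

end CommRing

section Field

variable {F : Type*} [Field F]

theorem finrank_span_mk_monomial (M : σ → ℕ) (n : σ →₀ ℕ) :
    Module.finrank F ((Ideal.span {Ideal.Quotient.mk (truncationIdeal F M)
        (monomial n (1 : F))}).restrictScalars F) =
      Nat.card {a : σ →₀ ℕ | n ≤ a ∧ ∀ j, a j < M j} := by
  set S := {a : σ →₀ ℕ | n ≤ a ∧ ∀ j, a j < M j}
  have hinj : Function.Injective
      ((Ideal.Quotient.mkₐ F (truncationIdeal F M)).toLinearMap.domRestrict
        (restrictSupport F S)) := by
    have hker : LinearMap.ker (Ideal.Quotient.mkₐ F (truncationIdeal F M)).toLinearMap =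
        (truncationIdeal F M).restrictScalars F := by
      ext f
      simp [Ideal.Quotient.eq_zero_iff_mem]
    rw [LinearMap.injective_domRestrict_iff, hker]
    exact (disjoint_restrictSupport_truncationIdeal M).mono_left
      (restrictSupport_mono F fun a ha => ha.2)
  rw [restrictScalars_span_mk_monomial, ← LinearMap.range_domRestrict,
    LinearMap.finrank_range_of_inj hinj,
    Module.finrank_eq_nat_card_basis (basisRestrictSupport F S)]

end Field

theorem natCard_setOf_equivFunOnFinite_symm_le_and_forall_lt [Fintype σ] (N M : σ → ℕ) :
    Nat.card {a : σ →₀ ℕ | Finsupp.equivFunOnFinite.symm N ≤ a ∧ ∀ j, a j < M j} =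
      ∏ j, (M j - N j) := by
  have e : {a : σ →₀ ℕ | Finsupp.equivFunOnFinite.symm N ≤ a ∧ ∀ j, a j < M j} ≃
      ∀ j, Set.Ico (N j) (M j) :=
    (Finsupp.equivFunOnFinite.subtypeEquiv fun a => by simp [Finsupp.le_def, forall_and]).trans
      (Equiv.subtypePiEquivPi (p := fun j b => b ∈ Set.Ico (N j) (M j)))
  rw [Nat.card_congr e, Nat.card_pi]
  simp

end MvPolynomial

open MvPolynomial

theorem finrank_restrictScalars_span_singleton_algEquiv {F A B : Type*} [Field F] [CommRing A]
    [CommRing B] [Algebra F A] [Algebra F B] (e : A ≃ₐ[F] B) (a : A) :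
    Module.finrank F ((Ideal.span {e a}).restrictScalars F) =
      Module.finrank F ((Ideal.span {a}).restrictScalars F) := by
  have hmap : (Ideal.span {e a}).restrictScalars F =
      ((Ideal.span {a}).restrictScalars F).map e.toLinearEquiv.toLinearMap := by
    ext x
    simp only [Submodule.restrictScalars_mem, Submodule.mem_map, Ideal.mem_span_singleton']
    constructor
    · rintro ⟨b, rfl⟩
      exact ⟨e.symm b * a, ⟨_, rfl⟩, by simp⟩
    · rintro ⟨_, ⟨b, rfl⟩, rfl⟩
      exact ⟨e b, by simp⟩
  rw [hmap, LinearEquiv.finrank_map_eq]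

theorem stmt_10_general (p : ℕ) (hp : p.Prime) (F : Type) [Field F] [CharP F p]
    (n : ℕ) (s N : Fin n → ℕ)
    (I : Ideal (MvPolynomial (Fin n) F))
    (hI : I = Ideal.span (Set.range fun j : Fin n => X j ^ p ^ s j - 1))
    (C : Ideal (MvPolynomial (Fin n) F ⧸ I))
    (hC : C = Ideal.span {Ideal.Quotient.mk I (∏ j : Fin n, (X j - 1) ^ N j)}) :
    Module.finrank F (Submodule.restrictScalars F C) = ∏ j : Fin n, (p ^ s j - N j) := by
  have : Fact p.Prime := ⟨hp⟩
  let τ := translateAlgEquiv fun _ : Fin n => (1 : F)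
  have hI' : I = (truncationIdeal F fun j => p ^ s j).map τ := by
    rw [hI, map_translateAlgEquiv_truncationIdeal]
    simp
  let e := Ideal.quotientEquivAlg _ I τ hI'
  have he : e (Ideal.Quotient.mk _ (∏ j, X j ^ N j)) =
      Ideal.Quotient.mk I (∏ j : Fin n, (X j - 1) ^ N j) := by
    show Ideal.Quotient.mk I (τ _) = _
    simp [τ, map_prod]
  rw [hC, ← he, finrank_restrictScalars_span_singleton_algEquiv,
    prod_X_pow_eq_monomial_equivFunOnFinite_symm, finrank_span_mk_monomial,
    natCard_setOf_equivFunOnFinite_symm_le_and_forall_lt]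

/-- The monomial-like code `C = ⟨(x₁−1)^{N₁}⋯(x_n−1)^{N_n}⟩ ⊆ F_q[x]/⟨x_j^{p^{s_j}}−1⟩`, viewed
as an `F_q`-vector space, has dimension `(p^{s₁}−N₁)⋯(p^{s_n}−N_n)`. -/
theorem stmt_10 (p : ℕ) (hp : p.Prime) (F : Type) [Field F] [Fintype F] [CharP F p]
    (n : ℕ) (s N : Fin n → ℕ) (hs : ∀ j, 0 < s j) (hN : ∀ j, N j ≤ p ^ s j)
    (I : Ideal (MvPolynomial (Fin n) F))
    (hI : I = Ideal.span (Set.range fun j : Fin n => X j ^ p ^ s j - 1))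
    (C : Ideal (MvPolynomial (Fin n) F ⧸ I))
    (hC : C = Ideal.span {Ideal.Quotient.mk I (∏ j : Fin n, (X j - 1) ^ N j)}) :
    Module.finrank F (Submodule.restrictScalars F C) = ∏ j : Fin n, (p ^ s j - N j) :=
  stmt_10_general p hp F n s N I hI C hC
end

section
/- Let p be a prime, F_q a finite field of characteristic p, s_1,…,s_n positive integers, and N_1,…,N_n integers with 0 ≤ N_j ≤ p^{s_j} for all j. Let C = ⟨(x_1 − 1)^{N_1}···(x_n − 1)^{N_n}⟩ ⊆ R = F_q[x_1,…,x_n]/⟨x_1^{p^{s_1}} − 1, …, x_n^{p^{s_n}} − 1⟩. Let T = { (a_1,…,a_n) ∈ ℕ^n : 0 ≤ a_j < p^{s_j} for all j, and p^{s_j} − N_j ≤ a_j for at least one j }, and let B = { (x_1 − 1)^{a_1}···(x_n − 1)^{a_n} : (a_1,…,a_n) ∈ T } ⊆ R. Then |T| = p^{s_1}···p^{s_n} − (p^{s_1} − N_1)···(p^{s_n} − N_n), and B is an F_q-basis of the Euclidean dual code C^⊥. -/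
/-!
In characteristic `p` we have `(x_j - 1)^{q_j} = x_j^{q_j} - 1` for `q_j = p^{s_j}`, so the
substitution `x_j ↦ x_j - 1` carries `⟨x_j^{q_j}⟩` onto `⟨x_j^{q_j} - 1⟩`. Hence the products
`(x - 1)^m`, `m` in the box `∏ [0, q_j)`, form a basis of `R`, and `C` is spanned by those
with `m ≥ N`, so `dim C = ∏ (q_j - N_j)`.

The Euclidean product of `(x - 1)^t` and `(x - 1)^a` factors over the variables, and by
Vandermonde its `j`-th factor is `±C(t_j + a_j, a_j)`, which vanishes mod `p` as soon as
`t_j + a_j ≥ p^{s_j}` (Kummer). So every `(x - 1)^a`, `a ∈ T`, is orthogonal to `C`; these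
vectors are independent, and as the product is nondegenerate,
`|T| = ∏ q_j - ∏ (q_j - N_j) = dim R - dim C = dim C^⊥`.
-/

open MvPolynomial Finset

theorem Nat.Prime.dvd_add_choose_of_lt_pow {p s t a : ℕ} (hp : p.Prime) (ht : t < p ^ s)
    (ha : a < p ^ s) (hta : p ^ s ≤ t + a) : p ∣ (t + a).choose a := by
  have := Fact.mk hp
  have hs : s ≠ 0 := by rintro rfl; rw [pow_zero] at ht ha hta; omega
  have hlog : Nat.log p (t + a) < s + 1 :=
    Nat.log_lt_of_lt_pow (by omega) (by rw [pow_succ]; nlinarith [hp.two_le])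
  -- Kummer: adding `t` and `a` in base `p` carries into digit `s`.
  apply dvd_of_one_le_padicValNat
  rw [padicValNat_choose' hlog, Nat.one_le_iff_ne_zero, ← Nat.pos_iff_ne_zero, Finset.card_pos]
  exact ⟨s, by simp [Nat.mod_eq_of_lt ht, Nat.mod_eq_of_lt ha]; omega⟩

theorem Nat.sum_range_choose_mul_choose {t a Q : ℕ} (ha : a < Q) :
    ∑ k ∈ range Q, t.choose k * a.choose k = (t + a).choose a := by
  rw [Nat.add_choose_eq, Nat.sum_antidiagonal_eq_sum_range_succ_mk,
    ← sum_subset (range_subset_range.mpr ha)]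
  · refine sum_congr rfl fun k hk => ?_
    rw [Nat.choose_symm (Nat.lt_succ_iff.mp (mem_range.mp hk))]
  · intro k _ hk
    rw [Nat.choose_eq_zero_of_lt (n := a) (by simpa using hk), mul_zero]

namespace Polynomial

theorem coeff_X_sub_one_pow {R : Type*} [Ring R] (n k : ℕ) :
    ((X - 1 : R[X]) ^ n).coeff k = (-1) ^ (n - k) * n.choose k := by
  rw [← coeff_X_add_C_pow, C_neg, C_1, sub_eq_add_neg]

theorem sum_range_coeff_X_sub_one_pow_mul {R : Type*} [CommRing R] {t a Q : ℕ} (ha : a < Q) :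
    ∑ i ∈ range Q, ((X - 1 : R[X]) ^ t).coeff i * ((X - 1 : R[X]) ^ a).coeff i
      = (-1) ^ (t + a) * (t + a).choose a := by
  have hterm : ∀ i, ((X - 1 : R[X]) ^ t).coeff i * ((X - 1 : R[X]) ^ a).coeff i
      = (-1) ^ (t + a) * (t.choose i * a.choose i : ℕ) := by
    intro i
    simp only [coeff_X_sub_one_pow]
    rcases lt_or_ge t i with hti | hit
    · simp [Nat.choose_eq_zero_of_lt hti]
    rcases lt_or_ge a i with hai | hia
    · simp [Nat.choose_eq_zero_of_lt hai]
    rw [show t + a = (t - i) + (a - i) + 2 * i by omega, pow_add, pow_add, pow_mul]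
    push_cast
    ring
  rw [sum_congr rfl fun i _ => hterm i, ← mul_sum, ← Nat.cast_sum,
    Nat.sum_range_choose_mul_choose ha]

end Polynomial

namespace MvPolynomial

theorem coeff_prod_aeval_X {R σ : Type*} [CommSemiring R] [Fintype σ] [DecidableEq σ]
    (P : σ → Polynomial R) (k : σ → ℕ) :
    coeff (Finsupp.equivFunOnFinite.symm k) (∏ j, Polynomial.aeval (X j) (P j))
      = ∏ j, (P j).coeff (k j) := by
  have hterm : ∀ t : σ → ℕ, ∏ j, (P j).coeff (t j) • (X j : MvPolynomial σ R) ^ t j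
      = monomial (Finsupp.equivFunOnFinite.symm t) (∏ j, (P j).coeff (t j)) := by
    intro t
    simp_rw [X_pow_eq_monomial, smul_monomial, smul_eq_mul, mul_one, ← monomial_sum_prod,
      Finsupp.equivFunOnFinite_symm_eq_sum]
  simp_rw [Polynomial.aeval_eq_sum_range, prod_univ_sum, hterm, coeff_sum, coeff_monomial,
    EmbeddingLike.apply_eq_iff_eq, sum_ite_eq', Fintype.mem_piFinset, mem_range, Nat.lt_succ_iff]
  split_ifs with hk
  · rfl
  · obtain ⟨j, hj⟩ := not_forall.mp hk
    rw [not_le] at hj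
    exact (prod_eq_zero (mem_univ j) (Polynomial.coeff_eq_zero_of_natDegree_lt hj)).symm

theorem coeff_prod_X_sub_one_pow {R σ : Type*} [CommRing R] [Fintype σ] [DecidableEq σ]
    (m k : σ → ℕ) :
    coeff (Finsupp.equivFunOnFinite.symm k) (∏ j, (X j - 1 : MvPolynomial σ R) ^ m j)
      = ∏ j, ((Polynomial.X - 1 : Polynomial R) ^ m j).coeff (k j) := by
  rw [← coeff_prod_aeval_X]
  simp

end MvPolynomial

namespace MvCyclicCode

variable {σ F : Type*} [Field F] {q : σ → ℕ}

theorem mk_monomial (K : Ideal (MvPolynomial σ F)) (u : σ →₀ ℕ) (a : F) :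
    Ideal.Quotient.mk K (monomial u a) = a • Ideal.Quotient.mk K (monomial u 1) := by
  rw [← Ideal.Quotient.mkₐ_eq_mk F, ← map_smul, smul_monomial, smul_eq_mul, mul_one]

variable (F) in
noncomputable def truncIdeal (q : σ → ℕ) : Ideal (MvPolynomial σ F) :=
  Ideal.span (Set.range fun j => X j ^ q j)

variable (F) in
noncomputable def cyclicIdeal (q : σ → ℕ) : Ideal (MvPolynomial σ F) :=
  Ideal.span (Set.range fun j => X j ^ q j - 1)

theorem mem_truncIdeal_iff {f : MvPolynomial σ F} :
    f ∈ truncIdeal F q ↔ ∀ u ∈ f.support, ∃ j, q j ≤ u j := by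
  have hgen : (Set.range fun j => (X j : MvPolynomial σ F) ^ q j)
      = (fun u => monomial u 1) '' Set.range fun j => Finsupp.single j (q j) := by
    rw [← Set.range_comp]
    simp_rw [Function.comp_def, X_pow_eq_monomial]
  simp [truncIdeal, hgen, mem_ideal_span_monomial_image, Finsupp.single_le_iff]

variable (σ F) in
noncomputable def shiftEquiv : MvPolynomial σ F ≃ₐ[F] MvPolynomial σ F :=
  AlgEquiv.ofAlgHom (aeval fun j => X j - 1) (aeval fun j => X j + 1)
    (by ext j; simp) (by ext j; simp)

theorem map_truncIdeal_shiftEquiv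
    (hchar : ∀ j, (X j - 1 : MvPolynomial σ F) ^ q j = X j ^ q j - 1) :
    (truncIdeal F q).map (shiftEquiv σ F) = cyclicIdeal F q := by
  rw [truncIdeal, cyclicIdeal, Ideal.map_span, ← Set.range_comp]
  congr 1
  ext
  simp [shiftEquiv, hchar]

variable [Fintype σ]

theorem shiftEquiv_monomial (m : σ → ℕ) :
    shiftEquiv σ F (monomial (Finsupp.equivFunOnFinite.symm m) 1) = ∏ j, (X j - 1) ^ m j := by
  rw [shiftEquiv, AlgEquiv.ofAlgHom_apply, aeval_monomial, map_one, one_mul,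
    Finsupp.prod_fintype _ _ fun j => pow_zero _]
  simp

variable (F q) in
noncomputable def powSubOne (m : σ → ℕ) : MvPolynomial σ F ⧸ cyclicIdeal F q :=
  Ideal.Quotient.mk _ (∏ j, (X j - 1) ^ m j)

theorem powSubOne_mul (m m' : σ → ℕ) :
    powSubOne F q m * powSubOne F q m' = powSubOne F q (m + m') := by
  simp only [powSubOne, ← map_mul, ← prod_mul_distrib, ← pow_add, Pi.add_apply]

variable [DecidableEq σ]

def box (q : σ → ℕ) : Finset (σ → ℕ) := Fintype.piFinset fun j => range (q j)

theorem mem_box {m : σ → ℕ} : m ∈ box q ↔ ∀ j, m j < q j := by simp [box]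

theorem card_box (q : σ → ℕ) : #(box q) = ∏ j, q j := by simp [box]

def IsReduced (q : σ → ℕ) (f : MvPolynomial σ F) : Prop := ∀ u ∈ f.support, ⇑u ∈ box q

theorem isReduced_iff_degreeOf_lt (hq : ∀ j, 0 < q j) {f : MvPolynomial σ F} :
    IsReduced q f ↔ ∀ j, degreeOf j f < q j := by
  simp only [IsReduced, mem_box, degreeOf_lt_iff (hq _)]
  exact ⟨fun h j u hu => h u hu j, fun h u hu j => h j u hu⟩

theorem isReduced_sum_monomial (c : box q → F) :
    IsReduced q (∑ m : box q, monomial (Finsupp.equivFunOnFinite.symm m.1) (c m)) := by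
  intro u hu
  obtain ⟨m, -, hm⟩ := mem_biUnion.mp (support_sum hu)
  rw [(mem_singleton.mp (support_monomial_subset hm))]
  exact m.2

theorem coeff_sum_monomial (c : box q → F) (m : box q) :
    coeff (Finsupp.equivFunOnFinite.symm m.1)
      (∑ m : box q, monomial (Finsupp.equivFunOnFinite.symm m.1) (c m)) = c m := by
  rw [coeff_sum, sum_eq_single m (fun m' _ hne => ?_) (by simp), coeff_monomial, if_pos rfl]
  rw [coeff_monomial, if_neg]
  exact fun h => hne (Subtype.ext (Finsupp.equivFunOnFinite.symm.injective h))

theorem isReduced_prod_X_sub_one_pow {m : σ → ℕ} (hm : m ∈ box q) :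
    IsReduced q (∏ j, (X j - 1 : MvPolynomial σ F) ^ m j) := by
  intro u hu
  rw [mem_support_iff, ← Finsupp.equivFunOnFinite_symm_coe u, coeff_prod_X_sub_one_pow] at hu
  refine mem_box.mpr fun j => lt_of_le_of_lt (not_lt.mp fun hlt => ?_) (mem_box.mp hm j)
  apply prod_ne_zero_iff.mp hu j (mem_univ j)
  rw [Polynomial.coeff_X_sub_one_pow, Nat.choose_eq_zero_of_lt hlt, Nat.cast_zero, mul_zero]

theorem IsReduced.sum_box_eq_sum_support {M : Type*} [AddCommMonoid M] {f : MvPolynomial σ F}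
    (hf : IsReduced q f) {G : (σ →₀ ℕ) → M} (hG : ∀ u, coeff u f = 0 → G u = 0) :
    ∑ m ∈ box q, G (Finsupp.equivFunOnFinite.symm m) = ∑ u ∈ f.support, G u := by
  calc ∑ m ∈ box q, G (Finsupp.equivFunOnFinite.symm m)
      = ∑ u ∈ (box q).map Finsupp.equivFunOnFinite.symm.toEmbedding, G u := by
        rw [sum_map]; rfl
    _ = ∑ u ∈ f.support, G u := by
      refine (sum_subset (fun (u : σ →₀ ℕ) hu => mem_map.mpr ?_)
        fun u _ hu => hG u (notMem_support_iff.mp hu)).symm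
      exact ⟨u, hf u hu, Finsupp.equivFunOnFinite_symm_coe u⟩

theorem IsReduced.mk_eq_sum {f : MvPolynomial σ F} (hf : IsReduced q f)
    (K : Ideal (MvPolynomial σ F)) :
    Ideal.Quotient.mk K f = ∑ m ∈ box q, coeff (Finsupp.equivFunOnFinite.symm m) f •
      Ideal.Quotient.mk K (monomial (Finsupp.equivFunOnFinite.symm m) 1) := by
  conv_lhs => rw [f.as_sum, map_sum]
  rw [hf.sum_box_eq_sum_support (G := fun u => coeff u f • Ideal.Quotient.mk K (monomial u 1))
    fun u hu => by rw [hu, zero_smul]]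
  exact sum_congr rfl fun u _ => mk_monomial K u _

theorem monomial_mem_truncIdeal {u : σ →₀ ℕ} (hu : ⇑u ∉ box q) :
    monomial u (1 : F) ∈ truncIdeal F q := by
  rw [mem_truncIdeal_iff]
  intro v hv
  rw [mem_singleton.mp (support_monomial_subset hv)]
  simpa [mem_box] using hu

theorem IsReduced.eq_zero_of_mem_truncIdeal {f : MvPolynomial σ F} (hf : IsReduced q f)
    (hJ : f ∈ truncIdeal F q) : f = 0 := by
  by_contra hne
  obtain ⟨u, hu⟩ := support_nonempty.mpr hne
  obtain ⟨j, hj⟩ := mem_truncIdeal_iff.mp hJ u hu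
  exact hj.not_gt (mem_box.mp (hf u hu) j)

variable (F q) in
noncomputable def truncBasis : Module.Basis (box q) F (MvPolynomial σ F ⧸ truncIdeal F q) :=
  .mk (v := fun m => Ideal.Quotient.mk _ (monomial (Finsupp.equivFunOnFinite.symm m.1) 1))
    (by
      rw [Fintype.linearIndependent_iff]
      intro c hc m
      have hmem : ∑ m : box q, monomial (Finsupp.equivFunOnFinite.symm m.1) (c m)
          ∈ truncIdeal F q := by
        rw [← Ideal.Quotient.eq_zero_iff_mem, ← hc, map_sum]
        exact sum_congr rfl fun m _ => mk_monomial _ _ _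
      rw [← coeff_sum_monomial c m, (isReduced_sum_monomial c).eq_zero_of_mem_truncIdeal hmem,
        coeff_zero])
    (by
      rintro x -
      obtain ⟨f, rfl⟩ := Ideal.Quotient.mk_surjective x
      induction f using MvPolynomial.induction_on' with
      | monomial u a =>
        rw [mk_monomial]
        refine Submodule.smul_mem _ _ ?_
        by_cases hu : ⇑u ∈ box q
        · exact Submodule.subset_span ⟨⟨u, hu⟩, by simp⟩
        · rw [Ideal.Quotient.eq_zero_iff_mem.mpr (monomial_mem_truncIdeal hu)]
          exact Submodule.zero_mem _
      | add f g hf hg => rw [map_add]; exact add_mem hf hg)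

theorem truncBasis_apply (m : box q) :
    truncBasis F q m = Ideal.Quotient.mk _ (monomial (Finsupp.equivFunOnFinite.symm m.1) 1) :=
  Module.Basis.mk_apply _ _ _

def codeExponents (q N : σ → ℕ) : Finset (σ → ℕ) := {m ∈ box q | ∀ j, N j ≤ m j}

def dualExponents (q N : σ → ℕ) : Finset (σ → ℕ) :=
  {m ∈ box q | ∃ j, q j - N j ≤ m j}

theorem codeExponents_subset_box {N : σ → ℕ} : codeExponents q N ⊆ box q := filter_subset _ _

theorem dualExponents_subset_box {N : σ → ℕ} : dualExponents q N ⊆ box q := filter_subset _ _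

theorem card_codeExponents (N : σ → ℕ) : #(codeExponents q N) = ∏ j, (q j - N j) := by
  have hpi : codeExponents q N = Fintype.piFinset fun j => Ico (N j) (q j) := by
    ext m
    simp only [codeExponents, mem_filter, mem_box, Fintype.mem_piFinset, mem_Ico]
    exact ⟨fun h j => ⟨h.2 j, h.1 j⟩, fun h => ⟨fun j => (h j).2, fun j => (h j).1⟩⟩
  simp [hpi]

theorem card_dualExponents (N : σ → ℕ) :
    #(dualExponents q N) = ∏ j, q j - ∏ j, (q j - N j) := by
  have hpi : {m ∈ box q | ¬∃ j, q j - N j ≤ m j}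
      = Fintype.piFinset fun j => range (q j - N j) := by
    ext m
    simp only [mem_filter, mem_box, not_exists, not_le, Fintype.mem_piFinset, mem_range]
    exact ⟨fun h => h.2, fun h => ⟨fun j => (h j).trans_le (Nat.sub_le _ _), h⟩⟩
  rw [← card_box,
    ← card_filter_add_card_filter_not (s := box q) (fun m => ∃ j, q j - N j ≤ m j), hpi,
    Fintype.card_piFinset]
  simp [dualExponents]

section CharP

variable (hchar : ∀ j, (X j - 1 : MvPolynomial σ F) ^ q j = X j ^ q j - 1)

noncomputable def powSubOneBasis :
    Module.Basis (box q) F (MvPolynomial σ F ⧸ cyclicIdeal F q) :=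
  (truncBasis F q).map (Ideal.quotientEquivAlg _ _ (shiftEquiv σ F)
    (map_truncIdeal_shiftEquiv hchar).symm).toLinearEquiv

theorem powSubOneBasis_apply (m : box q) : powSubOneBasis hchar m = powSubOne F q m.1 := by
  rw [powSubOneBasis, Module.Basis.map_apply, truncBasis_apply, powSubOne, ← shiftEquiv_monomial]
  rfl

include hchar in
theorem finrank_quotient_cyclicIdeal :
    Module.finrank F (MvPolynomial σ F ⧸ cyclicIdeal F q) = ∏ j, q j := by
  rw [Module.finrank_eq_card_basis (powSubOneBasis hchar), Fintype.card_coe, card_box]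

include hchar in
theorem powSubOne_eq_zero {m : σ → ℕ} {j : σ} (hj : q j ≤ m j) : powSubOne F q m = 0 := by
  rw [powSubOne, Ideal.Quotient.eq_zero_iff_mem, ← mul_prod_erase univ _ (mem_univ j),
    ← Nat.add_sub_cancel' hj, pow_add, hchar, mul_assoc]
  exact Ideal.mul_mem_right _ _ (Ideal.subset_span ⟨j, rfl⟩)

include hchar in
theorem linearIndependent_powSubOne {S : Finset (σ → ℕ)} (hS : S ⊆ box q) :
    LinearIndependent F fun m : S => powSubOne F q m.1 := by
  have := (powSubOneBasis hchar).linearIndependent.comp (fun m : S => ⟨m.1, hS m.2⟩)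
    fun a b h => Subtype.ext (by simpa using congrArg Subtype.val h)
  simpa [Function.comp_def, powSubOneBasis_apply] using this

include hchar in
theorem restrictScalars_span_powSubOne (N : σ → ℕ) :
    (Ideal.span {powSubOne F q N}).restrictScalars F
      = Submodule.span F (Set.range fun m : codeExponents q N => powSubOne F q m.1) := by
  apply le_antisymm
  · intro u hu
    obtain ⟨r, rfl⟩ := Ideal.mem_span_singleton'.mp hu
    rw [← (powSubOneBasis hchar).sum_repr r, sum_mul]
    refine sum_mem fun m _ => ?_
    rw [smul_mul_assoc, powSubOneBasis_apply, powSubOne_mul]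
    refine Submodule.smul_mem _ _ ?_
    by_cases hmN : m.1 + N ∈ box q
    · exact Submodule.subset_span
        ⟨⟨m.1 + N, mem_filter.mpr ⟨hmN, fun j => Nat.le_add_left _ _⟩⟩, rfl⟩
    · obtain ⟨j, hj⟩ : ∃ j, q j ≤ (m.1 + N) j := by simpa [mem_box] using hmN
      rw [powSubOne_eq_zero hchar hj]
      exact zero_mem _
  · rw [Submodule.span_le]
    rintro _ ⟨m, rfl⟩
    refine Ideal.mem_span_singleton'.mpr ⟨powSubOne F q (m.1 - N), ?_⟩
    rw [powSubOne_mul, tsub_add_cancel_of_le fun j => (mem_filter.mp m.2).2 j]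

noncomputable def monomialBasis :
    Module.Basis (box q) F (MvPolynomial σ F ⧸ cyclicIdeal F q) :=
  basisOfTopLeSpanOfCardEqFinrank
    (fun m => Ideal.Quotient.mk _ (monomial (Finsupp.equivFunOnFinite.symm m.1) 1))
    (by
      rw [← (powSubOneBasis hchar).span_eq, Submodule.span_le]
      rintro _ ⟨m, rfl⟩
      rw [powSubOneBasis_apply, powSubOne, (isReduced_prod_X_sub_one_pow m.2).mk_eq_sum]
      exact sum_mem fun m' hm' =>
        Submodule.smul_mem _ _ (Submodule.subset_span ⟨⟨m', hm'⟩, rfl⟩))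
    (by rw [finrank_quotient_cyclicIdeal hchar, Fintype.card_coe, card_box])

theorem monomialBasis_repr_mk {g : MvPolynomial σ F} (hg : IsReduced q g) (m : box q) :
    (monomialBasis hchar).repr (Ideal.Quotient.mk _ g) m
      = coeff (Finsupp.equivFunOnFinite.symm m.1) g := by
  have hsum : Ideal.Quotient.mk _ g
      = ∑ m : box q, coeff (Finsupp.equivFunOnFinite.symm m.1) g • monomialBasis hchar m := by
    rw [hg.mk_eq_sum, ← sum_coe_sort]
    simp [monomialBasis]
  rw [hsum, Module.Basis.repr_sum_self]

include hchar in
theorem exists_isReduced_mk_eq (u : MvPolynomial σ F ⧸ cyclicIdeal F q) :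
    ∃ f, IsReduced q f ∧ Ideal.Quotient.mk _ f = u := by
  refine ⟨∑ m : box q, monomial (Finsupp.equivFunOnFinite.symm m.1)
    ((monomialBasis hchar).repr u m), isReduced_sum_monomial _, ?_⟩
  conv_rhs => rw [← (monomialBasis hchar).sum_repr u]
  rw [map_sum]
  refine sum_congr rfl fun m _ => ?_
  rw [mk_monomial]
  simp [monomialBasis]

-- The Euclidean product of the paper: the dot product of coordinates in the monomial basis.
noncomputable def dotForm : LinearMap.BilinForm F (MvPolynomial σ F ⧸ cyclicIdeal F q) :=
  Matrix.toBilin (monomialBasis hchar) 1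

theorem dotForm_nondegenerate : (dotForm hchar).Nondegenerate :=
  (Matrix.nondegenerate_toBilin_iff _).mpr (Matrix.nondegenerate_of_det_ne_zero (by simp))

theorem dotForm_mk_mk {f g : MvPolynomial σ F} (hf : IsReduced q f) (hg : IsReduced q g) :
    dotForm hchar (Ideal.Quotient.mk _ f) (Ideal.Quotient.mk _ g)
      = ∑ m ∈ box q, coeff (Finsupp.equivFunOnFinite.symm m) f
          * coeff (Finsupp.equivFunOnFinite.symm m) g := by
  simp [dotForm, Matrix.one_apply, monomialBasis_repr_mk hchar hf, monomialBasis_repr_mk hchar hg,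
    ← sum_coe_sort (box q)]

theorem mk_mem_orthogonal_iff (W : Submodule F (MvPolynomial σ F ⧸ cyclicIdeal F q))
    {g : MvPolynomial σ F} (hg : IsReduced q g) :
    Ideal.Quotient.mk _ g ∈ (dotForm hchar).orthogonal W ↔
      ∀ f, IsReduced q f → Ideal.Quotient.mk _ f ∈ W →
        ∑ u ∈ f.support, coeff u f * coeff u g = 0 := by
  have hform (f : MvPolynomial σ F) (hf : IsReduced q f) :
      dotForm hchar (Ideal.Quotient.mk _ f) (Ideal.Quotient.mk _ g)
        = ∑ u ∈ f.support, coeff u f * coeff u g :=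
    (dotForm_mk_mk hchar hf hg).trans <|
      hf.sum_box_eq_sum_support (G := fun u => coeff u f * coeff u g) fun u hu => by
        rw [hu, zero_mul]
  rw [LinearMap.BilinForm.mem_orthogonal_iff]
  constructor
  · intro h f hf hfW
    rw [← hform f hf]
    exact h _ hfW
  · intro h u hu
    obtain ⟨f, hf, rfl⟩ := exists_isReduced_mk_eq hchar u
    exact (hform f hf).trans (h f hf hu)

theorem dotForm_powSubOne {t a : σ → ℕ} (ht : t ∈ box q) (ha : a ∈ box q) :
    dotForm hchar (powSubOne F q t) (powSubOne F q a)
      = ∏ j, ∑ i ∈ range (q j), ((Polynomial.X - 1 : Polynomial F) ^ t j).coeff i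
          * ((Polynomial.X - 1 : Polynomial F) ^ a j).coeff i := by
  rw [powSubOne, powSubOne,
    dotForm_mk_mk hchar (isReduced_prod_X_sub_one_pow ht) (isReduced_prod_X_sub_one_pow ha),
    prod_univ_sum]
  simp_rw [coeff_prod_X_sub_one_pow, ← prod_mul_distrib]
  rfl

theorem dotForm_powSubOne_eq_zero {p : ℕ} (hp : p.Prime) [CharP F p]
    (hq : ∀ j, ∃ e, q j = p ^ e) {t a : σ → ℕ} (ht : t ∈ box q) (ha : a ∈ box q)
    {j : σ} (hj : q j ≤ t j + a j) :
    dotForm hchar (powSubOne F q t) (powSubOne F q a) = 0 := by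
  rw [dotForm_powSubOne hchar ht ha]
  refine prod_eq_zero (mem_univ j) ?_
  have htj := mem_box.mp ht j
  have haj := mem_box.mp ha j
  rw [Polynomial.sum_range_coeff_X_sub_one_pow_mul haj, (CharP.cast_eq_zero_iff F p _).mpr,
    mul_zero]
  obtain ⟨e, he⟩ := hq j
  rw [he] at htj haj hj
  exact hp.dvd_add_choose_of_lt_pow htj haj hj

theorem span_dualExponents_eq_orthogonal {p : ℕ} (hp : p.Prime) [CharP F p]
    (hq : ∀ j, ∃ e, q j = p ^ e) (N : σ → ℕ) :
    Submodule.span F (Set.range fun a : dualExponents q N => powSubOne F q a.1)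
      = (dotForm hchar).orthogonal ((Ideal.span {powSubOne F q N}).restrictScalars F) := by
  have := Module.Finite.of_basis (powSubOneBasis hchar)
  refine Submodule.eq_of_le_of_finrank_le ?_ ?_
  · rw [Submodule.span_le]
    rintro _ ⟨a, rfl⟩
    obtain ⟨haq, j, hj⟩ := mem_filter.mp a.2
    rw [SetLike.mem_coe, LinearMap.BilinForm.mem_orthogonal_iff,
      restrictScalars_span_powSubOne hchar]
    intro u hu
    refine (Submodule.span_le (p := LinearMap.ker ((dotForm hchar).flip (powSubOne F q a.1)))).mpr
      ?_ hu
    rintro _ ⟨m, rfl⟩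
    obtain ⟨hmq, hNm⟩ := mem_filter.mp m.2
    have hNj := hNm j
    have hmj := mem_box.mp hmq j
    change dotForm hchar (powSubOne F q m.1) (powSubOne F q a.1) = 0
    exact dotForm_powSubOne_eq_zero hchar hp hq hmq haq (j := j) (by omega)
  · rw [LinearMap.BilinForm.finrank_orthogonal (dotForm_nondegenerate hchar),
      finrank_quotient_cyclicIdeal hchar, restrictScalars_span_powSubOne hchar,
      finrank_span_eq_card (linearIndependent_powSubOne hchar codeExponents_subset_box),
      finrank_span_eq_card (linearIndependent_powSubOne hchar dualExponents_subset_box),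
      Fintype.card_coe, Fintype.card_coe, card_codeExponents, card_dualExponents]

end CharP

end MvCyclicCode

theorem stmt_11_general (p : ℕ) (hp : p.Prime) (F : Type) [Field F] [CharP F p]
    (n : ℕ) (s N : Fin n → ℕ)
    (I : Ideal (MvPolynomial (Fin n) F))
    (hI : I = Ideal.span (Set.range fun j : Fin n => X j ^ p ^ s j - 1))
    (C : Ideal (MvPolynomial (Fin n) F ⧸ I))
    (hC : C = Ideal.span {Ideal.Quotient.mk I (∏ j : Fin n, (X j - 1) ^ N j)})
    (T : Finset (Fin n → ℕ))
    (hT : T = (Fintype.piFinset fun j : Fin n => Finset.range (p ^ s j)).filter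
      (fun a => ∃ j, p ^ s j - N j ≤ a j))
    (b : T → MvPolynomial (Fin n) F ⧸ I)
    (hb : ∀ a : T, b a = Ideal.Quotient.mk I (∏ j : Fin n, (X j - 1) ^ (a.1 j))) :
    T.card = ∏ j : Fin n, p ^ s j - ∏ j : Fin n, (p ^ s j - N j) ∧
    LinearIndependent F b ∧
    (∀ g : MvPolynomial (Fin n) F, (∀ j, degreeOf j g < p ^ s j) →
      (Ideal.Quotient.mk I g ∈ Submodule.span F (Set.range b) ↔
        ∀ f : MvPolynomial (Fin n) F, (∀ j, degreeOf j f < p ^ s j) →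
          Ideal.Quotient.mk I f ∈ C →
            ∑ m ∈ f.support, coeff m f * coeff m g = 0)) := by
  have := Fact.mk hp
  have hq : ∀ j, 0 < p ^ s j := fun j => pow_pos hp.pos _
  have hchar (j : Fin n) : (X j - 1 : MvPolynomial (Fin n) F) ^ p ^ s j = X j ^ p ^ s j - 1 := by
    simpa using sub_pow_char_pow (p := p) (x := (X j : MvPolynomial (Fin n) F)) (y := 1) (n := s j)
  obtain rfl : I = MvCyclicCode.cyclicIdeal F (fun j => p ^ s j) := hI
  obtain rfl : C = Ideal.span {MvCyclicCode.powSubOne F _ N} := hC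
  -- The two filters differ only in their decidability instances.
  obtain rfl : T = MvCyclicCode.dualExponents (fun j => p ^ s j) N := by
    rw [hT]
    congr
  obtain rfl : b = fun a => MvCyclicCode.powSubOne F _ a.1 := funext hb
  refine ⟨MvCyclicCode.card_dualExponents N,
    MvCyclicCode.linearIndependent_powSubOne hchar MvCyclicCode.dualExponents_subset_box,
    fun g hg => ?_⟩
  rw [MvCyclicCode.span_dualExponents_eq_orthogonal hchar hp (fun j => ⟨s j, rfl⟩),
    MvCyclicCode.mk_mem_orthogonal_iff hchar _
      ((MvCyclicCode.isReduced_iff_degreeOf_lt hq).mpr hg)]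
  simp_rw [MvCyclicCode.isReduced_iff_degreeOf_lt hq, Submodule.restrictScalars_mem]

/-- For the monomial-like code `C = ⟨(x₁−1)^{N₁}⋯(x_n−1)^{N_n}⟩ ⊆ F_q[x]/⟨x_j^{p^{s_j}}−1⟩`,
with `T = {a : 0 ≤ a_j < p^{s_j}, and p^{s_j} − N_j ≤ a_j for some j}`, we have
`|T| = p^{s₁}⋯p^{s_n} − (p^{s₁}−N₁)⋯(p^{s_n}−N_n)`, and the family
`B = {(x₁−1)^{a₁}⋯(x_n−1)^{a_n} : a ∈ T}` is an `F_q`-basis of the Euclidean dual `C^⊥`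
(i.e. it is linearly independent and its span consists exactly of the classes orthogonal
to every codeword of `C`). -/
theorem stmt_11 (p : ℕ) (hp : p.Prime) (F : Type) [Field F] [Fintype F] [CharP F p]
    (n : ℕ) (s N : Fin n → ℕ) (hs : ∀ j, 0 < s j) (hN : ∀ j, N j ≤ p ^ s j)
    (I : Ideal (MvPolynomial (Fin n) F))
    (hI : I = Ideal.span (Set.range fun j : Fin n => X j ^ p ^ s j - 1))
    (C : Ideal (MvPolynomial (Fin n) F ⧸ I))
    (hC : C = Ideal.span {Ideal.Quotient.mk I (∏ j : Fin n, (X j - 1) ^ N j)})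
    (T : Finset (Fin n → ℕ))
    (hT : T = (Fintype.piFinset fun j : Fin n => Finset.range (p ^ s j)).filter
      (fun a => ∃ j, p ^ s j - N j ≤ a j))
    (b : T → MvPolynomial (Fin n) F ⧸ I)
    (hb : ∀ a : T, b a = Ideal.Quotient.mk I (∏ j : Fin n, (X j - 1) ^ (a.1 j))) :
    T.card = ∏ j : Fin n, p ^ s j - ∏ j : Fin n, (p ^ s j - N j) ∧
    LinearIndependent F b ∧
    (∀ g : MvPolynomial (Fin n) F, (∀ j, degreeOf j g < p ^ s j) →
      (Ideal.Quotient.mk I g ∈ Submodule.span F (Set.range b) ↔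
        ∀ f : MvPolynomial (Fin n) F, (∀ j, degreeOf j f < p ^ s j) →
          Ideal.Quotient.mk I f ∈ C →
            ∑ m ∈ f.support, coeff m f * coeff m g = 0)) :=
  stmt_11_general p hp F n s N I hI C hC T hT b hb
end

section
/- Let p be a prime, F_q a finite field of characteristic p, and let i, k be integers with 0 ≤ i < p and k ≥ 1. Let C = ⟨(x − 1)^i⟩ ⊆ F_q[x]/⟨x^p − 1⟩ and let D be a k-dimensional F_q-subspace of C. Then |χ(D)| > i + k − 1, where χ(D) is the support of D. -/
/-!
A nonzero codeword is represented by `g` with `deg g < p` and `(X - 1)^i ∣ g`. The Euler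
operator `θ = X · d/dX` lowers the multiplicity of the root `1` by at most one and acts on
coefficients by `g_j ↦ j g_j`, so the moments `∑ⱼ g_j jᵐ = (θᵐ g)(1)` vanish for `m < i`.
The exponents `j < p` are distinct in characteristic `p`, so by Vandermonde `g` has more
than `i` nonzero coefficients. Finally, a subspace whose nonzero vectors all have weight
`> i` embeds into the coordinates of its support minus any `i` of them, so
`k ≤ |χ(D)| - i`.
-/

open Polynomial

theorem Finset.eq_zero_of_forall_sum_mul_pow_eq_zero {ι R : Type*} [CommRing R] [IsDomain R]
    {s : Finset ι} {x c : ι → R} (hx : Set.InjOn x s)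
    (h : ∀ m < s.card, ∑ j ∈ s, c j * x j ^ m = 0) : ∀ j ∈ s, c j = 0 := by
  let e := s.equivFin
  have hc : (fun a => c (e.symm a)) = 0 := by
    refine Matrix.eq_zero_of_forall_pow_sum_mul_pow_eq_zero (f := fun a => x (e.symm a))
      (fun a b hab => e.symm.injective (Subtype.ext (hx (e.symm a).2 (e.symm b).2 hab))) ?_
    intro m
    rw [← h m m.2, ← s.sum_coe_sort]
    exact e.symm.sum_comp (fun j : s => c j * x j ^ (m : ℕ))
  intro j hj
  simpa [e] using congrFun hc (e ⟨j, hj⟩)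

namespace Polynomial

variable {R : Type*}

noncomputable def eulerOperator [Semiring R] (q : R[X]) : R[X] := X * derivative q

theorem coeff_eulerOperator_iterate [CommSemiring R] (q : R[X]) (m j : ℕ) :
    (eulerOperator^[m] q).coeff j = (j : R) ^ m * q.coeff j := by
  induction m generalizing q with
  | zero => simp
  | succ m ih =>
    rw [Function.iterate_succ_apply, ih]
    cases j with
    | zero => simp [eulerOperator]
    | succ j =>
      rw [eulerOperator, coeff_X_mul, coeff_derivative]
      push_cast
      ring

theorem pow_sub_dvd_eulerOperator_iterate [CommSemiring R] {p q : R[X]} {n : ℕ} (m : ℕ)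
    (h : q ^ n ∣ p) : q ^ (n - m) ∣ eulerOperator^[m] p := by
  induction m with
  | zero => simpa
  | succ m ih =>
    rw [Nat.sub_succ, Function.iterate_succ_apply']
    exact (pow_sub_one_dvd_derivative_of_pow_dvd ih).mul_left X

theorem eval_one_eulerOperator_iterate [CommSemiring R] (q : R[X]) (m : ℕ) :
    (eulerOperator^[m] q).eval 1 = ∑ j ∈ q.support, q.coeff j * (j : R) ^ m := by
  have hsupp : (eulerOperator^[m] q).support ⊆ q.support := fun j hj => by
    rw [mem_support_iff, coeff_eulerOperator_iterate] at hj
    exact mem_support_iff.2 (right_ne_zero_of_mul hj)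
  rw [eval_eq_sum, sum_eq_of_subset _ (by simp) hsupp]
  simp only [coeff_eulerOperator_iterate, one_pow, mul_one]
  exact Finset.sum_congr rfl fun j _ => mul_comm _ _

theorem lt_card_support_of_X_sub_one_pow_dvd [CommRing R] [IsDomain R]
    {p : ℕ} [CharP R p] {g : R[X]} (hg : g ≠ 0) (hdeg : g.natDegree < p) {i : ℕ}
    (hdvd : (X - 1 : R[X]) ^ i ∣ g) : i < g.support.card := by
  by_contra! hcard
  have hinj : Set.InjOn (fun j : ℕ => (j : R)) g.support := fun a ha b hb hab =>
    CharP.natCast_injOn_Iio R p (lt_of_le_of_lt (le_natDegree_of_mem_supp a ha) hdeg)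
      (lt_of_le_of_lt (le_natDegree_of_mem_supp b hb) hdeg) hab
  have hmoments : ∀ m < g.support.card, ∑ j ∈ g.support, g.coeff j * (j : R) ^ m = 0 := by
    intro m hm
    have hroot : (X - C 1 : R[X]) ∣ eulerOperator^[m] g := by
      simpa using (pow_dvd_pow _ (by omega : 1 ≤ i - m)).trans
        (pow_sub_dvd_eulerOperator_iterate m hdvd)
    rw [← eval_one_eulerOperator_iterate]
    exact dvd_iff_isRoot.1 hroot
  obtain ⟨j, hj⟩ := support_nonempty.2 hg
  exact mem_support_iff.1 hj (Finset.eq_zero_of_forall_sum_mul_pow_eq_zero hinj hmoments j hj)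

theorem ncard_setOf_coeff_ne_zero [Semiring R] {n : ℕ} {g : R[X]}
    (hdeg : g.natDegree < n) : {t : Fin n | g.coeff t ≠ 0}.ncard = g.support.card := by
  rw [← Set.ncard_image_of_injective _ Fin.val_injective, ← Set.ncard_coe_finset]
  congr 1
  ext j
  simp only [Set.mem_image, Set.mem_ofPred_eq, Finset.mem_coe, mem_support_iff]
  constructor
  · rintro ⟨t, ht, rfl⟩
    exact ht
  · intro hj
    exact ⟨⟨j, lt_of_le_of_lt (le_natDegree_of_ne_zero hj) hdeg⟩, hj, rfl⟩

end Polynomial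

theorem Submodule.finrank_le_ncard_support_sub {K M ι : Type*} [Field K] [AddCommGroup M]
    [Module K M] [Finite ι] (v : M →ₗ[K] ι → K) (D : Submodule K M) (d : ℕ)
    (hweight : ∀ z ∈ D, z ≠ 0 → d < {t | v z t ≠ 0}.ncard) :
    Module.finrank K D ≤ {t | ∃ z ∈ D, v z t ≠ 0}.ncard - d := by
  set S := {t | ∃ z ∈ D, v z t ≠ 0}
  obtain ⟨Z, hZS, hZ⟩ := Set.exists_subset_card_eq (min_le_right d S.ncard)
  let π : D →ₗ[K] ↥(S \ Z) → K :=
    (LinearMap.pi fun t : ↥(S \ Z) => LinearMap.proj (t : ι) ∘ₗ v) ∘ₗ D.subtype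
  have hπ : Function.Injective π := by
    rw [← LinearMap.ker_eq_bot, Submodule.eq_bot_iff]
    rintro ⟨z, hz⟩ hπz
    by_contra hne
    have hsub : {t | v z t ≠ 0} ⊆ Z := fun t ht => by
      by_contra htZ
      exact ht (congrFun hπz ⟨t, ⟨z, hz, ht⟩, htZ⟩)
    have hlt := hweight z hz (by simpa using hne)
    have hle := Set.ncard_le_ncard hsub
    omega
  have := Fintype.ofFinite ↥(S \ Z)
  calc Module.finrank K D ≤ Module.finrank K (↥(S \ Z) → K) :=
        π.finrank_le_finrank_of_injective hπ
    _ = (S \ Z).ncard := by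
        rw [Module.finrank_fintype_fun_eq_card, ← Nat.card_eq_fintype_card, Nat.card_coe_set_eq]
    _ = S.ncard - d := by rw [Set.ncard_sdiff hZS, hZ]; omega

namespace AdjoinRoot

variable {R : Type*} [CommRing R] {f : R[X]}

theorem natDegree_modByMonicHom_lt (hf : f.Monic) (hf1 : f ≠ 1) (z : AdjoinRoot f) :
    (modByMonicHom hf z).natDegree < f.natDegree := by
  induction z using AdjoinRoot.induction_on with
  | ih g => rw [modByMonicHom_mk]; exact natDegree_modByMonic_lt g hf hf1

theorem modByMonicHom_mk_of_natDegree_lt [Nontrivial R] (hf : f.Monic) {g : R[X]}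
    (hg : g.natDegree < f.natDegree) : modByMonicHom hf (mk f g) = g := by
  rw [modByMonicHom_mk, modByMonic_eq_self_iff hf]
  exact degree_lt_degree hg

theorem dvd_modByMonicHom_of_mem_span (hf : f.Monic) {q : R[X]} (hqf : q ∣ f)
    {z : AdjoinRoot f} (hz : z ∈ Ideal.span {mk f q}) : q ∣ modByMonicHom hf z := by
  obtain ⟨a, rfl⟩ := Ideal.mem_span_singleton'.1 hz
  induction a using AdjoinRoot.induction_on with
  | ih h =>
    rw [← map_mul, modByMonicHom_mk]
    exact (dvd_iff_dvd_of_dvd_sub (hqf.trans (dvd_modByMonic_sub _ _))).2 (dvd_mul_left q h)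

theorem setOf_exists_coeff_ne_zero [Nontrivial R] (hf : f.Monic) (hf1 : f ≠ 1) {n : ℕ}
    (hn : f.natDegree = n) (D : Submodule R (R[X] ⧸ Ideal.span {f})) :
    {t : Fin n | ∃ g : R[X], g.natDegree < n ∧ Ideal.Quotient.mk _ g ∈ D ∧
      g.coeff t ≠ 0} =
      {t : Fin n | ∃ z ∈ D, (modByMonicHom hf z).coeff t ≠ 0} := by
  subst hn
  ext t
  constructor
  · rintro ⟨g, hg, hgD, hgt⟩
    refine ⟨_, hgD, ?_⟩
    convert hgt using 2
    exact modByMonicHom_mk_of_natDegree_lt hf hg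
  · rintro ⟨z, hzD, hzt⟩
    rw [← mk_leftInverse hf z] at hzD
    exact ⟨_, natDegree_modByMonicHom_lt hf hf1 z, hzD, hzt⟩

end AdjoinRoot

theorem stmt_12_general (p : ℕ) (hp : p.Prime) (F : Type) [Field F] [CharP F p]
    (i k : ℕ) (hi : i < p) (hk : 1 ≤ k)
    (I : Ideal (Polynomial F)) (hI : I = Ideal.span {Polynomial.X ^ p - 1})
    (C : Ideal (Polynomial F ⧸ I))
    (hC : C = Ideal.span {Ideal.Quotient.mk I ((Polynomial.X - 1) ^ i)})
    (D : Submodule F (Polynomial F ⧸ I))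
    (hDC : D ≤ Submodule.restrictScalars F C)
    (hDk : Module.finrank F D = k) :
    i + k - 1 < Set.ncard {t : Fin p | ∃ g : Polynomial F, g.natDegree < p ∧
      Ideal.Quotient.mk I g ∈ D ∧ g.coeff (t : ℕ) ≠ 0} := by
  have := Fact.mk hp
  subst hI hC
  have hfactor : (X ^ p - 1 : F[X]) = (X - 1) ^ p := by rw [sub_pow_char, one_pow]
  have hmonic : (X ^ p - 1 : F[X]).Monic := by simpa using monic_X_pow_sub_C (1 : F) hp.ne_zero
  have hdeg : (X ^ p - 1 : F[X]).natDegree = p := by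
    simpa using natDegree_X_pow_sub_C (n := p) (r := (1 : F))
  have hne_one : (X ^ p - 1 : F[X]) ≠ 1 := fun h => hp.ne_zero (by simpa [h] using hdeg.symm)
  rw [AdjoinRoot.setOf_exists_coeff_ne_zero hmonic hne_one hdeg D]
  set V := AdjoinRoot.modByMonicHom hmonic
  have hweight : ∀ z ∈ D, z ≠ 0 → i < {t : Fin p | (V z).coeff t ≠ 0}.ncard := by
    intro z hzD hz
    have hVdeg : (V z).natDegree < p :=
      (AdjoinRoot.natDegree_modByMonicHom_lt hmonic hne_one z).trans_eq hdeg
    have hVz : V z ≠ 0 := (map_ne_zero_iff V (AdjoinRoot.mk_leftInverse hmonic).injective).2 hz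
    have hdvd : (X - 1 : F[X]) ^ i ∣ V z := AdjoinRoot.dvd_modByMonicHom_of_mem_span hmonic
      (hfactor ▸ pow_dvd_pow _ hi.le) (hDC hzD)
    rw [ncard_setOf_coeff_ne_zero hVdeg]
    exact lt_card_support_of_X_sub_one_pow_dvd hVz hVdeg hdvd
  have hrank : Module.finrank F D ≤ {t : Fin p | ∃ z ∈ D, (V z).coeff t ≠ 0}.ncard - i :=
    Submodule.finrank_le_ncard_support_sub ((LinearMap.pi fun t : Fin p => lcoeff F t) ∘ₗ V) D i
      hweight
  omega

/-- If `D` is a `k`-dimensional (`k ≥ 1`) `F_q`-subspace of the code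
`C = ⟨(x−1)^i⟩ ⊆ F_q[x]/⟨x^p − 1⟩` (with `0 ≤ i < p`), then the support of `D` has more than
`i + k − 1` coordinates. Elements of the quotient are identified with the length-`p`
coefficient vectors of their unique representatives of degree `< p`. -/
theorem stmt_12 (p : ℕ) (hp : p.Prime) (F : Type) [Field F] [Fintype F] [CharP F p]
    (i k : ℕ) (hi : i < p) (hk : 1 ≤ k)
    (I : Ideal (Polynomial F)) (hI : I = Ideal.span {Polynomial.X ^ p - 1})
    (C : Ideal (Polynomial F ⧸ I))
    (hC : C = Ideal.span {Ideal.Quotient.mk I ((Polynomial.X - 1) ^ i)})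
    (D : Submodule F (Polynomial F ⧸ I))
    (hDC : D ≤ Submodule.restrictScalars F C)
    (hDk : Module.finrank F D = k) :
    i + k - 1 < Set.ncard {t : Fin p | ∃ g : Polynomial F, g.natDegree < p ∧
      Ideal.Quotient.mk I g ∈ D ∧ g.coeff (t : ℕ) ≠ 0} :=
  stmt_12_general p hp F i k hi hk I hI C hC D hDC hDk
end

section
/- Let p be a prime, F_q a finite field of characteristic p, and let i be an integer with 0 ≤ i < p. Let C = ⟨(x − 1)^i⟩ ⊆ F_q[x]/⟨x^p − 1⟩. Then for every integer r with 1 ≤ r ≤ p − i, the r-th generalized Hamming weight of C satisfies d_r(C) = i + r. -/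
/-!
Since `X ^ p - 1 = (X - 1) ^ p` in characteristic `p`, the elements of `C` are represented by the
polynomials of degree `< p` divisible by `(X - 1) ^ i`. A dimension count on Taylor coefficients at
`1` puts, in every `r`-dimensional subspace of `C`, a nonzero polynomial divisible by
`(X - 1) ^ (i + r - 1)`; and a polynomial of degree `< p` with a root of multiplicity `m` at a
nonzero point has at least `m + 1` terms. Conversely, the multiples of `(X - 1) ^ i` by polynomials
of degree `< r` form an `r`-dimensional subspace supported on the first `i + r` coordinates.
-/

open Polynomial Finset Module

namespace Polynomial

theorem card_support_eq_ncard {R : Type*} [Semiring R] {n : ℕ} {g : R[X]}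
    (hg : g.natDegree < n) : #g.support = {t : Fin n | g.coeff t ≠ 0}.ncard := by
  rw [← Set.ncard_coe_finset, ← Set.ncard_image_of_injective _ Fin.val_injective]
  congr
  ext j
  simp only [Finset.mem_coe, mem_support_iff, Set.mem_ofPred_eq, Set.mem_image]
  refine ⟨fun hj ↦ ⟨⟨j, (le_natDegree_of_ne_zero hj).trans_lt hg⟩, hj, rfl⟩, ?_⟩
  rintro ⟨t, ht, rfl⟩
  exact ht

section CharP

variable {R : Type*} [CommRing R]

theorem coeff_X_mul_derivative_sub_C_mul (g : R[X]) (c : R) (j : ℕ) :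
    (X * derivative g - C c * g).coeff j = ((j : R) - c) * g.coeff j := by
  cases j with
  | zero => simp [mul_coeff_zero]
  | succ n => rw [coeff_sub, coeff_X_mul, coeff_derivative, coeff_C_mul]; push_cast; ring

theorem pow_dvd_X_mul_derivative_sub_C_mul {q g : R[X]} {m : ℕ} (h : q ^ (m + 1) ∣ g) (c : R) :
    q ^ m ∣ X * derivative g - C c * g :=
  ((pow_sub_one_dvd_derivative_of_pow_dvd h).mul_left X).sub
    (((pow_dvd_pow q m.le_succ).trans h).mul_left _)

variable [IsDomain R] {p : ℕ} [CharP R p]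

theorem support_X_mul_derivative_sub_C_mul {g : R[X]} (hg : g.natDegree < p) {j₀ : ℕ}
    (hj₀ : j₀ < p) : (X * derivative g - C (j₀ : R) * g).support = g.support.erase j₀ := by
  ext j
  rw [mem_erase, mem_support_iff, mem_support_iff, coeff_X_mul_derivative_sub_C_mul,
    mul_ne_zero_iff, sub_ne_zero, and_congr_left_iff]
  intro hj
  have hjp : j < p := (le_natDegree_of_ne_zero hj).trans_lt hg
  rw [Ne, Ne, CharP.natCast_eq_natCast R p, Nat.ModEq, Nat.mod_eq_of_lt hjp,
    Nat.mod_eq_of_lt hj₀]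

theorem one_lt_card_support_of_isRoot {g : R[X]} (hg : g ≠ 0) {a : R} (ha : a ≠ 0)
    (hroot : g.IsRoot a) : 1 < #g.support := by
  refine lt_of_le_of_ne (card_pos.2 (support_nonempty.2 hg)) fun h ↦ ?_
  obtain ⟨k, x, hx, rfl⟩ := card_support_eq_one.1 h.symm
  simp [IsRoot, hx, ha] at hroot

/-- The operator `g ↦ X g' - j₀ g` removes exactly the term of degree `j₀` from `g` while lowering
the multiplicity of the root `a` by at most one; a nonzero root forces a second term. -/
theorem add_one_le_card_support_of_X_sub_C_pow_dvd {a : R} (ha : a ≠ 0)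
    {m : ℕ} {g : R[X]} (hg : g ≠ 0) (hgp : g.natDegree < p) (hdvd : (X - C a) ^ m ∣ g) :
    m + 1 ≤ #g.support := by
  induction m generalizing g with
  | zero => exact card_pos.2 (support_nonempty.2 hg)
  | succ m ih =>
    obtain ⟨j₀, hj₀⟩ := support_nonempty.2 hg
    set h := X * derivative g - C (j₀ : R) * g
    have hsupp : h.support = g.support.erase j₀ :=
      support_X_mul_derivative_sub_C_mul hgp ((le_natDegree_of_mem_supp _ hj₀).trans_lt hgp)
    have hcard : #h.support + 1 = #g.support := by rw [hsupp, card_erase_add_one hj₀]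
    have hroot : g.IsRoot a := by
      rw [← dvd_iff_isRoot]; exact (dvd_pow_self _ m.succ_ne_zero).trans hdvd
    have h0 : h ≠ 0 := by
      rw [← support_nonempty, ← card_pos]
      have := one_lt_card_support_of_isRoot hg ha hroot
      omega
    have hhp : h.natDegree < p := by
      have hmem := natDegree_mem_support_of_nonzero h0
      rw [hsupp] at hmem
      exact (le_natDegree_of_mem_supp _ (mem_of_mem_erase hmem)).trans_lt hgp
    have := ih h0 hhp (pow_dvd_X_mul_derivative_sub_C_mul hdvd _)
    omega

end CharP

theorem exists_ne_zero_X_sub_C_pow_dvd_of_lt_finrank {K : Type*} [Field K] (a : K)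
    {V : Submodule K K[X]} {i n : ℕ} (hV : ∀ g ∈ V, (X - C a) ^ i ∣ g)
    (hn : n < finrank K V) :
    ∃ g ∈ V, g ≠ 0 ∧ (X - C a) ^ (i + n) ∣ g := by
  have : FiniteDimensional K V := Module.finite_of_finrank_pos (by omega)
  let Φ : V →ₗ[K] (Fin n → K) :=
    LinearMap.pi fun j ↦ (lcoeff K (i + j)).comp ((taylor a).comp V.subtype)
  obtain ⟨⟨g, hgV⟩, hker, hg0⟩ := Submodule.exists_mem_ne_zero_of_ne_bot
    (LinearMap.ker_ne_bot_of_finrank_lt (f := Φ) (by rwa [finrank_fin_fun]))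
  refine ⟨g, hgV, fun h ↦ hg0 (Subtype.ext h), ?_⟩
  rw [X_sub_C_pow_dvd_iff, ← taylor_apply, X_pow_dvd_iff]
  intro d hd
  by_cases hdi : d < i
  · have hgi := hV g hgV
    rw [X_sub_C_pow_dvd_iff, ← taylor_apply, X_pow_dvd_iff] at hgi
    exact hgi d hdi
  · have := congrFun (LinearMap.mem_ker.1 hker) ⟨d - i, by omega⟩
    simpa [Φ, show i + (d - i) = d by omega] using this

section QuotientRepr

variable {K : Type*} [Field K] {f : K[X]} (hf : f.Monic)

/-- `AdjoinRoot.modByMonicHom` on `K[X] ⧸ ⟨f⟩` as written, rather than on `AdjoinRoot f`. -/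
noncomputable def quotientRepr : (K[X] ⧸ Ideal.span {f}) →ₗ[K] K[X] :=
  AdjoinRoot.modByMonicHom hf

theorem quotientRepr_mk (g : K[X]) : quotientRepr hf (Ideal.Quotient.mk _ g) = g %ₘ f :=
  AdjoinRoot.modByMonicHom_mk hf g

theorem mk_quotientRepr (z : K[X] ⧸ Ideal.span {f}) :
    Ideal.Quotient.mk _ (quotientRepr hf z) = z :=
  AdjoinRoot.mk_leftInverse hf z

theorem quotientRepr_mk_of_degree_lt {g : K[X]} (hg : g.degree < f.degree) :
    quotientRepr hf (Ideal.Quotient.mk _ g) = g := by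
  rw [quotientRepr_mk, (modByMonic_eq_self_iff hf).2 hg]

theorem natDegree_quotientRepr_lt {z : K[X] ⧸ Ideal.span {f}} (hz : quotientRepr hf z ≠ 0) :
    (quotientRepr hf z).natDegree < f.natDegree := by
  obtain ⟨g, rfl⟩ := Ideal.Quotient.mk_surjective z
  rw [quotientRepr_mk] at hz ⊢
  exact natDegree_lt_natDegree hz (degree_modByMonic_lt _ hf)

theorem finrank_map_quotientRepr (D : Submodule K (K[X] ⧸ Ideal.span {f})) :
    finrank K (D.map (quotientRepr hf)) = finrank K D :=
  (Submodule.equivMapOfInjective _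
    (Function.LeftInverse.injective (mk_quotientRepr hf)) D).finrank_eq.symm

theorem map_quotientRepr_map_mkₐ {W : Submodule K K[X]} (hW : W ≤ degreeLT K f.natDegree) :
    (W.map (Ideal.Quotient.mkₐ K (Ideal.span {f})).toLinearMap).map (quotientRepr hf) = W := by
  have hW' : ∀ g ∈ W, g.degree < f.degree := fun g hg ↦ by
    simpa [degree_eq_natDegree hf.ne_zero] using mem_degreeLT.1 (hW hg)
  ext g
  simp only [Submodule.mem_map, AlgHom.toLinearMap_apply, Ideal.Quotient.mkₐ_eq_mk]
  constructor
  · rintro ⟨_, ⟨h, hh, rfl⟩, rfl⟩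
    rwa [quotientRepr_mk_of_degree_lt hf (hW' h hh)]
  · exact fun hg ↦ ⟨_, ⟨g, hg, rfl⟩, quotientRepr_mk_of_degree_lt hf (hW' g hg)⟩

theorem dvd_quotientRepr {q : K[X]} (hq : q ∣ f) {z : K[X] ⧸ Ideal.span {f}}
    (hz : Ideal.Quotient.mk _ q ∣ z) : q ∣ quotientRepr hf z := by
  obtain ⟨u, rfl⟩ := hz
  obtain ⟨u, rfl⟩ := Ideal.Quotient.mk_surjective u
  rw [← map_mul, quotientRepr_mk, modByMonic_eq_sub_mul_div]
  exact (dvd_mul_right q u).sub (hq.mul_right _)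

end QuotientRepr

section CoeffSupport

variable {K : Type*} [Field K] {f : K[X]}

/-- The support `χ(D)`, reading elements of `K[X] ⧸ ⟨f⟩` as coefficient vectors of their
representatives of degree `< n` (meant for `n = deg f`). -/
def coeffSupport (n : ℕ) (D : Submodule K (K[X] ⧸ Ideal.span {f})) : Set (Fin n) :=
  {t | ∃ g : K[X], g.natDegree < n ∧ Ideal.Quotient.mk _ g ∈ D ∧ g.coeff t ≠ 0}

theorem add_le_ncard_coeffSupport (hf : f.Monic) {p : ℕ} [CharP K p] (hfp : f.natDegree = p)
    {a : K} (ha : a ≠ 0) {i r : ℕ} (hi : (X - C a) ^ i ∣ f) (hr : 0 < r)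
    {D : Submodule K (K[X] ⧸ Ideal.span {f})}
    (hDC : D ≤ (Ideal.span {Ideal.Quotient.mk _ ((X - C a) ^ i)}).restrictScalars K)
    (hDr : finrank K D = r) :
    i + r ≤ (coeffSupport p D).ncard := by
  obtain ⟨_, ⟨z, hzD, rfl⟩, hg0, hdvd⟩ :=
    exists_ne_zero_X_sub_C_pow_dvd_of_lt_finrank a (V := D.map (quotientRepr hf)) (n := r - 1)
      (by rintro _ ⟨z, hz, rfl⟩
          exact dvd_quotientRepr hf hi (Ideal.mem_span_singleton.1 (hDC hz)))
      (by rw [finrank_map_quotientRepr, hDr]; omega)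
  have hgp : (quotientRepr hf z).natDegree < p := hfp ▸ natDegree_quotientRepr_lt hf hg0
  calc i + r = i + (r - 1) + 1 := by omega
    _ ≤ #(quotientRepr hf z).support := add_one_le_card_support_of_X_sub_C_pow_dvd ha hg0 hgp hdvd
    _ = {t : Fin p | (quotientRepr hf z).coeff t ≠ 0}.ncard := card_support_eq_ncard hgp
    _ ≤ (coeffSupport p D).ncard :=
      Set.ncard_le_ncard fun t ht ↦ ⟨_, hgp, by rwa [mk_quotientRepr], ht⟩

theorem exists_finrank_eq_ncard_coeffSupport_le (hf : f.Monic) {n : ℕ} (hfn : f.natDegree = n)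
    {q : K[X]} (hq : q ≠ 0) {r : ℕ} (hqr : q.natDegree + r ≤ n) :
    ∃ D ≤ (Ideal.span {Ideal.Quotient.mk (Ideal.span {f}) q}).restrictScalars K,
      finrank K D = r ∧ (coeffSupport n D).ncard ≤ q.natDegree + r := by
  let W := (degreeLT K r).map (LinearMap.mulLeft K q)
  have hWdeg : W ≤ degreeLT K (q.natDegree + r) := by
    rintro _ ⟨h, hh, rfl⟩
    rw [SetLike.mem_coe, mem_degreeLT] at hh
    rw [mem_degreeLT, LinearMap.mulLeft_apply, degree_mul, degree_eq_natDegree hq, Nat.cast_add]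
    exact WithBot.add_lt_add_left WithBot.coe_ne_bot hh
  let D := W.map (Ideal.Quotient.mkₐ K (Ideal.span {f})).toLinearMap
  have hD : D.map (quotientRepr hf) = W :=
    map_quotientRepr_map_mkₐ hf (hWdeg.trans (degreeLT_mono (hfn ▸ hqr)))
  refine ⟨D, ?_, ?_, ?_⟩
  · rintro _ ⟨_, ⟨h, -, rfl⟩, rfl⟩
    show Ideal.Quotient.mk _ (q * h) ∈ Ideal.span _
    exact Ideal.mem_span_singleton.2 (_root_.map_dvd _ (dvd_mul_right q h))
  · rw [← finrank_map_quotientRepr hf, hD,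
      ← (Submodule.equivMapOfInjective _ (mul_right_injective₀ hq) _).finrank_eq,
      (degreeLTEquiv K r).finrank_eq, finrank_fin_fun]
  · calc (coeffSupport n D).ncard ≤ (Set.Iio (q.natDegree + r)).ncard := by
          refine Set.ncard_le_ncard_of_injOn Fin.val ?_ Fin.val_injective.injOn
          rintro t ⟨g, hg, hgD, ht⟩
          have hgW : g ∈ W := hD ▸
            ⟨_, hgD, quotientRepr_mk_of_degree_lt hf (degree_lt_degree (hfn ▸ hg))⟩
          by_contra htm
          exact ht (coeff_eq_zero_of_degree_lt ((mem_degreeLT.1 (hWdeg hgW)).trans_le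
            (by exact_mod_cast not_lt.1 htm)))
      _ = q.natDegree + r := Set.ncard_Iio_nat _

end CoeffSupport

end Polynomial

theorem stmt_13_general (p : ℕ) (hp : p.Prime) (F : Type) [Field F] [CharP F p]
    (i : ℕ)
    (I : Ideal (Polynomial F)) (hI : I = Ideal.span {Polynomial.X ^ p - 1})
    (C : Ideal (Polynomial F ⧸ I))
    (hC : C = Ideal.span {Ideal.Quotient.mk I ((Polynomial.X - 1) ^ i)}) :
    ∀ r : ℕ, 1 ≤ r → r ≤ p - i →
      sInf {w : ℕ | ∃ D : Submodule F (Polynomial F ⧸ I),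
        D ≤ Submodule.restrictScalars F C ∧ Module.finrank F D = r ∧
        w = Set.ncard {t : Fin p | ∃ g : Polynomial F, g.natDegree < p ∧
          Ideal.Quotient.mk I g ∈ D ∧ g.coeff (t : ℕ) ≠ 0}} = i + r := by
  intro r hr hri
  rw [← C_1] at hI hC
  subst hI hC
  have : Fact p.Prime := ⟨hp⟩
  have hf : (X ^ p - Polynomial.C 1 : F[X]).Monic := monic_X_pow_sub_C 1 hp.ne_zero
  have hfp : (X ^ p - Polynomial.C 1 : F[X]).natDegree = p := natDegree_X_pow_sub_C
  have hdvd : (X - Polynomial.C 1 : F[X]) ^ i ∣ X ^ p - Polynomial.C 1 := by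
    have hfrob : (X - Polynomial.C 1 : F[X]) ^ p = X ^ p - Polynomial.C 1 := by
      rw [sub_pow_char, ← C_pow, one_pow]
    exact hfrob ▸ pow_dvd_pow _ (by omega)
  obtain ⟨D₀, hD₀C, hD₀r, hD₀⟩ := exists_finrank_eq_ncard_coeffSupport_le hf hfp
    (pow_ne_zero i (X_sub_C_ne_zero 1)) (r := r) (by rw [natDegree_pow, natDegree_X_sub_C]; omega)
  refine le_antisymm (le_trans (Nat.sInf_le ⟨D₀, hD₀C, hD₀r, rfl⟩) ?_)
    (le_csInf ⟨_, D₀, hD₀C, hD₀r, rfl⟩ ?_)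
  · rwa [natDegree_pow, natDegree_X_sub_C, mul_one] at hD₀
  · rintro _ ⟨D, hDC, hDr, rfl⟩
    exact add_le_ncard_coeffSupport hf hfp one_ne_zero hdvd hr hDC hDr

/-- For the code `C = ⟨(x−1)^i⟩ ⊆ F_q[x]/⟨x^p − 1⟩` (with `0 ≤ i < p`) and every `r` with
`1 ≤ r ≤ p − i`, the `r`-th generalized Hamming weight satisfies `d_r(C) = i + r`, where
`d_r(C)` is the minimum cardinality of the support of an `r`-dimensional `F_q`-subspace of `C`.
Elements of the quotient are identified with the length-`p` coefficient vectors of their unique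
representatives of degree `< p`. -/
theorem stmt_13 (p : ℕ) (hp : p.Prime) (F : Type) [Field F] [Fintype F] [CharP F p]
    (i : ℕ) (hi : i < p)
    (I : Ideal (Polynomial F)) (hI : I = Ideal.span {Polynomial.X ^ p - 1})
    (C : Ideal (Polynomial F ⧸ I))
    (hC : C = Ideal.span {Ideal.Quotient.mk I ((Polynomial.X - 1) ^ i)}) :
    ∀ r : ℕ, 1 ≤ r → r ≤ p - i →
      sInf {w : ℕ | ∃ D : Submodule F (Polynomial F ⧸ I),
        D ≤ Submodule.restrictScalars F C ∧ Module.finrank F D = r ∧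
        w = Set.ncard {t : Fin p | ∃ g : Polynomial F, g.natDegree < p ∧
          Ideal.Quotient.mk I g ∈ D ∧ g.coeff (t : ℕ) ≠ 0}} = i + r :=
  stmt_13_general p hp F i I hI C hC
end

section
/- Let k_1, k_2 be positive integers, let i_1, i_2 be nonnegative integers, and let r be an integer with 1 ≤ r ≤ k_1·k_2. Suppose π_0 = (t_1, t_2, …, t_{k_1}) ∈ P(k_1,k_2,r) attains the minimum of ∇ over P(k_1,k_2,r), and set m = t_1. Let π = (m, m, …, m, u, 0, …, 0) ∈ P(k_1,k_2,r) be the (k_1,k_2)-partition of r all of whose nonzero parts equal m except possibly the last nonzero part u, where 0 < u ≤ m. Then ∇(π_0) = ∇(π). -/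
/-!
Since `w 0 = 0` and `w t = i₂ + t` otherwise, `∇(π) = i₁ · w(π₁) + i₂ · #(support π) + r` on
`P(k₁,k₂,r)`. The first part of `π` is at most `m = t₁`, and `π` has fewer than `r/m + 1` nonzero
parts, whereas `π₀`, whose parts are at most `m`, has at least `r/m` of them. Hence
`∇(π) ≤ ∇(π₀)`, and minimality of `π₀` gives equality.
-/

open Finset

section Weight

variable {ι : Type*} [Fintype ι] {i₂ : ℕ} {w : ℕ → ℕ}

theorem monotone_of_weight (hw0 : w 0 = 0) (hw : ∀ t, 1 ≤ t → w t = i₂ + t) : Monotone w := by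
  intro a b hab
  rcases Nat.eq_zero_or_pos a with rfl | ha
  · simp [hw0]
  · rw [hw a ha, hw b (ha.trans_le hab)]
    omega

theorem sum_weight_eq (hw0 : w 0 = 0) (hw : ∀ t, 1 ≤ t → w t = i₂ + t) (f : ι → ℕ) :
    ∑ i, w (f i) = i₂ * #{i | f i ≠ 0} + ∑ i, f i := by
  have hpoint : ∀ i, w (f i) = (if f i ≠ 0 then i₂ else 0) + f i := by
    intro i
    by_cases h : f i = 0
    · simp [h, hw0]
    · simp [h, hw _ (Nat.one_le_iff_ne_zero.mpr h)]
  rw [sum_congr rfl fun i _ => hpoint i, sum_add_distrib, card_filter, mul_sum]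
  simp only [mul_ite, mul_one, mul_zero]

theorem add_one_mul_weight_add_sum_erase [DecidableEq ι] (hw0 : w 0 = 0)
    (hw : ∀ t, 1 ≤ t → w t = i₂ + t) (a : ℕ) (f : ι → ℕ) (j : ι) :
    (a + 1) * w (f j) + ∑ i ∈ univ.erase j, w (f i) =
      a * w (f j) + (i₂ * #{i | f i ≠ 0} + ∑ i, f i) := by
  rw [← sum_weight_eq hw0 hw, ← add_sum_erase univ (fun i => w (f i)) (mem_univ j)]
  ring

end Weight

section Support

variable {ι : Type*} [Fintype ι] {m : ℕ}

theorem sum_le_card_support_mul {f : ι → ℕ} (h : ∀ i, f i ≤ m) :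
    ∑ i, f i ≤ #{i | f i ≠ 0} * m := by
  rw [← sum_filter_ne_zero]
  exact sum_le_card_nsmul _ _ _ fun i _ => h i

theorem card_support_mul_lt_sum_add [DecidableEq ι] {f : ι → ℕ} (hm : 0 < m) (j : ι)
    (h : ∀ i ≠ j, f i = 0 ∨ f i = m) :
    #{i | f i ≠ 0} * m < ∑ i, f i + m := by
  set S : Finset ι := {i | f i ≠ 0}
  have hrest : ∑ i ∈ S.erase j, f i = #(S.erase j) * m := by
    refine sum_const_nat fun i hi => ?_
    obtain ⟨hij, hiS⟩ := mem_erase.mp hi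
    exact (h i hij).resolve_left (mem_filter.mp hiS).2
  rw [← sum_filter_ne_zero]
  by_cases hjS : j ∈ S
  · have hj : 0 < f j := Nat.pos_of_ne_zero (mem_filter.mp hjS).2
    rw [← add_sum_erase S f hjS, hrest, ← card_erase_add_one hjS]
    nlinarith
  · rw [erase_eq_of_notMem hjS] at hrest
    rw [hrest]
    omega

theorem card_support_le_of_sum_eq [DecidableEq ι] {f g : ι → ℕ}
    (hm : 0 < m) (j : ι) (hf : ∀ i ≠ j, f i = 0 ∨ f i = m) (hg : ∀ i, g i ≤ m)
    (hsum : ∑ i, f i = ∑ i, g i) : #{i | f i ≠ 0} ≤ #{i | g i ≠ 0} := by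
  have hlt := card_support_mul_lt_sum_add hm j hf
  have hle := sum_le_card_support_mul hg
  have : #{i | f i ≠ 0} * m < (#{i | g i ≠ 0} + 1) * m := by
    rw [add_one_mul]
    omega
  exact Nat.lt_add_one_iff.mp (Nat.lt_of_mul_lt_mul_right this)

end Support

theorem stmt_14_general (k₁ k₂ : ℕ) (hk₁ : 0 < k₁) (i₁ i₂ : ℕ)
    (r : ℕ)
    (w : ℕ → ℕ) (hw0 : w 0 = 0) (hw : ∀ t, 1 ≤ t → w t = i₂ + t)
    (nabla : (Fin k₁ → ℕ) → ℕ)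
    (hnabla : ∀ π : Fin k₁ → ℕ,
      nabla π = (i₁ + 1) * w (π ⟨0, hk₁⟩) +
        ∑ i ∈ Finset.univ.erase ⟨0, hk₁⟩, w (π i))
    (π₀ : Fin k₁ → ℕ) (hπ₀anti : Antitone π₀) (hπ₀sum : ∑ i, π₀ i = r)
    (hπ₀min : ∀ π : Fin k₁ → ℕ, Antitone π → (∑ i, π i = r) → (∀ i, π i ≤ k₂) →
      nabla π₀ ≤ nabla π)
    (m : ℕ) (hm : m = π₀ ⟨0, hk₁⟩)
    (π : Fin k₁ → ℕ) (hπanti : Antitone π) (hπsum : ∑ i, π i = r) (hπle : ∀ i, π i ≤ k₂)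
    (u e : ℕ) (hu0 : 0 < u) (hum : u ≤ m)
    (hshape : ∀ i : Fin k₁,
      ((i : ℕ) < e → π i = m) ∧ ((i : ℕ) = e → π i = u) ∧ (e < (i : ℕ) → π i = 0)) :
    nabla π₀ = nabla π := by
  have hfirst : π ⟨0, hk₁⟩ ≤ m := by
    rcases Nat.eq_zero_or_pos e with he | he
    · rw [(hshape _).2.1 he.symm]; exact hum
    · rw [(hshape _).1 he]
  have hπ₀m : ∀ i, π₀ i ≤ m := fun i =>
    hm ▸ hπ₀anti (show (⟨0, hk₁⟩ : Fin k₁) ≤ i from Nat.zero_le _)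
  -- `e` clamped into `Fin k₁`: away from it every part of `π` is `0` or `m`
  have hparts : ∀ i ≠ (⟨min e (k₁ - 1), by omega⟩ : Fin k₁), π i = 0 ∨ π i = m := by
    intro i hi
    rcases lt_trichotomy (i : ℕ) e with h | h | h
    · exact .inr ((hshape i).1 h)
    · exact absurd (Fin.ext (show (i : ℕ) = min e (k₁ - 1) by omega)) hi
    · exact .inl ((hshape i).2.2 h)
  have hcard : #{i | π i ≠ 0} ≤ #{i | π₀ i ≠ 0} :=
    card_support_le_of_sum_eq (hu0.trans_le hum) _ hparts hπ₀m (hπsum.trans hπ₀sum.symm)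
  refine le_antisymm (hπ₀min π hπanti hπsum hπle) ?_
  rw [hnabla, hnabla, add_one_mul_weight_add_sum_erase hw0 hw,
    add_one_mul_weight_add_sum_erase hw0 hw, hπsum, hπ₀sum]
  have hw_first : w (π ⟨0, hk₁⟩) ≤ w (π₀ ⟨0, hk₁⟩) := monotone_of_weight hw0 hw (hm ▸ hfirst)
  gcongr

/-- If `π₀ = (t₁,…,t_{k₁}) ∈ P(k₁,k₂,r)` minimizes `∇` over all `(k₁,k₂)`-partitions of `r`,
`m = t₁`, and `π = (m,…,m,u,0,…,0) ∈ P(k₁,k₂,r)` is the partition all of whose nonzero parts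
equal `m` except possibly the last nonzero part `u` with `0 < u ≤ m`, then `∇(π₀) = ∇(π)`.
Here `w 0 = 0`, `w t = i₂ + t` for `t ≥ 1`, and
`∇(π) = (i₁+1)·w(π₁) + Σ_{i=2}^{k₁} w(π_i)`. -/
theorem stmt_14 (k₁ k₂ : ℕ) (hk₁ : 0 < k₁) (hk₂ : 0 < k₂) (i₁ i₂ : ℕ)
    (r : ℕ) (hr₁ : 1 ≤ r) (hr₂ : r ≤ k₁ * k₂)
    (w : ℕ → ℕ) (hw0 : w 0 = 0) (hw : ∀ t, 1 ≤ t → w t = i₂ + t)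
    (nabla : (Fin k₁ → ℕ) → ℕ)
    (hnabla : ∀ π : Fin k₁ → ℕ,
      nabla π = (i₁ + 1) * w (π ⟨0, hk₁⟩) +
        ∑ i ∈ Finset.univ.erase ⟨0, hk₁⟩, w (π i))
    (π₀ : Fin k₁ → ℕ) (hπ₀anti : Antitone π₀) (hπ₀sum : ∑ i, π₀ i = r)
    (hπ₀le : ∀ i, π₀ i ≤ k₂)
    (hπ₀min : ∀ π : Fin k₁ → ℕ, Antitone π → (∑ i, π i = r) → (∀ i, π i ≤ k₂) →
      nabla π₀ ≤ nabla π)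
    (m : ℕ) (hm : m = π₀ ⟨0, hk₁⟩)
    (π : Fin k₁ → ℕ) (hπanti : Antitone π) (hπsum : ∑ i, π i = r) (hπle : ∀ i, π i ≤ k₂)
    (u e : ℕ) (hu0 : 0 < u) (hum : u ≤ m)
    (hshape : ∀ i : Fin k₁,
      ((i : ℕ) < e → π i = m) ∧ ((i : ℕ) = e → π i = u) ∧ (e < (i : ℕ) → π i = 0)) :
    nabla π₀ = nabla π :=
  stmt_14_general k₁ k₂ hk₁ i₁ i₂ r w hw0 hw nabla hnabla π₀ hπ₀anti hπ₀sum hπ₀min m hm π hπanti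
    hπsum hπle u e hu0 hum hshape
end

section
/- Let k_1, k_2 be positive integers, let i_1, i_2 be nonnegative integers, and let r, α be integers with α ≥ 0 and α·k_1 < r ≤ (α + 1)·k_1 and r ≤ k_1·k_2. Let S be the set of all partitions in P(k_1,k_2,r) of the form (β, β, …, β, u_β, 0, …, 0) — all nonzero parts equal to β except possibly the last nonzero part u_β with 0 < u_β ≤ β — for some β with α + 1 ≤ β ≤ min{k_2, r}. Then min { ∇(π) : π ∈ P(k_1,k_2,r) } = min { ∇(π) : π ∈ S }. -/
/-!
Since `w t = i₂ + t` on nonzero parts, every partition `π` of `r` has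
`∇(π) = i₁ · w(π₁) + i₂ · #{i | π i ≠ 0} + r`. Keep the largest part `β = π₁`: as all parts are
at most `β`, `π` has at least `⌈r / β⌉` nonzero parts, and the staircase partition
`(β, …, β, u, 0, …, 0)` of `r` has the same largest part and exactly `⌈r / β⌉` nonzero parts,
so its `∇` is no larger. Moreover `r ≤ k₁ · β` forces `β ≥ α + 1`, so the staircase lies in `S`.
-/

open Finset

section PartsBound

variable {ι : Type*} [Fintype ι]

theorem sum_weight_eq_mul_card_ne_zero_add_sum {w : ℕ → ℕ} {c : ℕ} (hw0 : w 0 = 0)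
    (hw : ∀ t, 1 ≤ t → w t = c + t) (π : ι → ℕ) :
    ∑ i, w (π i) = c * #{i | π i ≠ 0} + ∑ i, π i := by
  have hterm : ∀ i, w (π i) = (if π i ≠ 0 then c else 0) + π i := by
    intro i
    by_cases h : π i = 0
    · simp [h, hw0]
    · simp [h, hw _ (Nat.one_le_iff_ne_zero.2 h)]
  rw [sum_congr rfl fun i _ => hterm i, sum_add_distrib, ← sum_filter, sum_const, smul_eq_mul,
    mul_comm]

theorem sum_le_card_ne_zero_mul {π : ι → ℕ} {β : ℕ} (hπ : ∀ i, π i ≤ β) :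
    ∑ i, π i ≤ #{i | π i ≠ 0} * β := by
  rw [← sum_filter_ne_zero]
  exact sum_le_card_nsmul _ _ _ fun i _ => hπ i

theorem sub_one_div_lt_card_ne_zero {π : ι → ℕ} {β r : ℕ} (hβ : 0 < β) (hr : 0 < r)
    (hπ : ∀ i, π i ≤ β) (hsum : ∑ i, π i = r) :
    (r - 1) / β < #{i | π i ≠ 0} := by
  have := sum_le_card_ne_zero_mul hπ
  rw [Nat.div_lt_iff_lt_mul hβ]
  omega

end PartsBound

/-- The partition `(β, …, β, u, 0, …)` of `r` with `(r - 1) / β + 1 = ⌈r / β⌉` nonzero parts.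
For `r = 0` truncated subtraction still leaves one part `1`, so lemmas about its sum need `0 < r`. -/
def staircase (β r n : ℕ) : ℕ :=
  if n < (r - 1) / β then β else if n = (r - 1) / β then (r - 1) % β + 1 else 0

section Staircase

variable {β r : ℕ}

theorem staircase_of_lt {n : ℕ} (h : n < (r - 1) / β) : staircase β r n = β := if_pos h

theorem staircase_self : staircase β r ((r - 1) / β) = (r - 1) % β + 1 := by
  simp [staircase]

theorem staircase_of_gt {n : ℕ} (h : (r - 1) / β < n) : staircase β r n = 0 := by
  rw [staircase, if_neg (by omega), if_neg (by omega)]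

theorem staircase_le (hβ : 0 < β) (n : ℕ) : staircase β r n ≤ β := by
  have := Nat.mod_lt (r - 1) hβ
  unfold staircase
  split_ifs <;> omega

theorem staircase_antitone (hβ : 0 < β) : Antitone (staircase β r) := by
  intro m n hmn
  have := Nat.mod_lt (r - 1) hβ
  unfold staircase
  split_ifs <;> omega

theorem staircase_zero (hβ : 0 < β) (hβr : β ≤ r) : staircase β r 0 = β := by
  rcases Nat.eq_zero_or_pos ((r - 1) / β) with he | he
  · have hlt : r - 1 < β := (Nat.div_eq_zero_iff_lt hβ).1 he
    rw [← he, staircase_self, Nat.mod_eq_of_lt hlt]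
    omega
  · exact staircase_of_lt he

theorem sum_fin_staircase_comp {k : ℕ} (f : ℕ → ℕ) (hf : f 0 = 0) (hk : (r - 1) / β < k) :
    ∑ i : Fin k, f (staircase β r i) = (r - 1) / β * f β + f ((r - 1) % β + 1) := by
  rw [Fin.sum_univ_eq_sum_range (fun n => f (staircase β r n)),
    ← sum_subset (range_subset_range.2 hk) fun n _ hn => ?_, sum_range_succ, staircase_self,
    sum_congr rfl fun n hn => by rw [staircase_of_lt (mem_range.1 hn)], sum_const, card_range,
    smul_eq_mul]
  rw [mem_range] at hn
  rw [staircase_of_gt (by omega), hf]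

theorem sum_fin_staircase {k : ℕ} (hr : 0 < r) (hk : (r - 1) / β < k) :
    ∑ i : Fin k, staircase β r i = r := by
  have := Nat.div_add_mod (r - 1) β
  have hsum := sum_fin_staircase_comp id rfl hk
  simp only [id] at hsum
  rw [hsum, mul_comm]
  omega

theorem card_fin_staircase_ne_zero {k : ℕ} (hβ : 0 < β) (hk : (r - 1) / β < k) :
    #{i : Fin k | staircase β r i ≠ 0} = (r - 1) / β + 1 := by
  rw [card_filter, sum_fin_staircase_comp (fun t => if t ≠ 0 then 1 else 0) rfl hk]
  simp [hβ.ne']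

end Staircase

theorem stmt_15_general (k₁ k₂ : ℕ) (hk₁ : 0 < k₁) (i₁ i₂ : ℕ)
    (r α : ℕ) (hrα : α * k₁ < r)
    (w : ℕ → ℕ) (hw0 : w 0 = 0) (hw : ∀ t, 1 ≤ t → w t = i₂ + t)
    (nabla : (Fin k₁ → ℕ) → ℕ)
    (hnabla : ∀ π : Fin k₁ → ℕ,
      nabla π = (i₁ + 1) * w (π ⟨0, hk₁⟩) +
        ∑ i ∈ Finset.univ.erase ⟨0, hk₁⟩, w (π i)) :
    sInf {v : ℕ | ∃ π : Fin k₁ → ℕ, Antitone π ∧ (∑ i, π i = r) ∧ (∀ i, π i ≤ k₂) ∧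
        v = nabla π} =
      sInf {v : ℕ | ∃ π : Fin k₁ → ℕ, Antitone π ∧ (∑ i, π i = r) ∧ (∀ i, π i ≤ k₂) ∧
        (∃ β u e : ℕ, α + 1 ≤ β ∧ β ≤ min k₂ r ∧ 0 < u ∧ u ≤ β ∧
          ∀ i : Fin k₁,
            ((i : ℕ) < e → π i = β) ∧ ((i : ℕ) = e → π i = u) ∧ (e < (i : ℕ) → π i = 0)) ∧
        v = nabla π} := by
  have hr0 : 0 < r := by omega
  have hnabla_eq : ∀ π : Fin k₁ → ℕ, ∑ i, π i = r →
      nabla π = i₁ * w (π ⟨0, hk₁⟩) + (i₂ * #{i | π i ≠ 0} + r) := by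
    intro π hsum
    rw [hnabla, ← hsum, ← sum_weight_eq_mul_card_ne_zero_add_sum hw0 hw,
      ← add_sum_erase _ _ (mem_univ _)]
    ring
  apply csInf_eq_csInf_of_forall_exists_le
  · rintro _ ⟨π, hanti, hsum, hbd, rfl⟩
    set β := π ⟨0, hk₁⟩
    have htop : ∀ i, π i ≤ β := fun i => hanti (Nat.zero_le i.val)
    have hrk : r ≤ k₁ * β := by
      simpa [hsum] using sum_le_card_nsmul univ π β fun i _ => htop i
    have hβ : 0 < β := Nat.pos_of_ne_zero fun h => by simp [h] at hrk; omega
    have hβr : β ≤ r := hsum ▸ single_le_sum (fun i _ => Nat.zero_le (π i)) (mem_univ _)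
    have hαβ : α + 1 ≤ β := Nat.lt_of_mul_lt_mul_right (a := k₁) (by rw [mul_comm β]; omega)
    have hk : (r - 1) / β < k₁ := by rw [Nat.div_lt_iff_lt_mul hβ]; omega
    refine ⟨nabla fun i => staircase β r i,
      ⟨_, (staircase_antitone hβ).comp_monotone Fin.val_strictMono.monotone,
        sum_fin_staircase hr0 hk, fun i => (staircase_le hβ i).trans (hbd _),
        ⟨β, _, (r - 1) / β, hαβ, le_min (hbd _) hβr, Nat.succ_pos _, Nat.mod_lt _ hβ,
          fun i => ⟨staircase_of_lt, fun h => h ▸ staircase_self, staircase_of_gt⟩⟩, rfl⟩, ?_⟩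
    rw [hnabla_eq _ (sum_fin_staircase hr0 hk), hnabla_eq π hsum, card_fin_staircase_ne_zero hβ hk]
    simp only [staircase_zero hβ hβr]
    have := sub_one_div_lt_card_ne_zero hβ hr0 htop hsum
    gcongr
    omega
  · rintro _ ⟨π, hanti, hsum, hbd, -, rfl⟩
    exact ⟨_, ⟨π, hanti, hsum, hbd, rfl⟩, le_rfl⟩

/-- Let `α·k₁ < r ≤ (α+1)·k₁` and `r ≤ k₁·k₂`. The minimum of `∇` over all
`(k₁,k₂)`-partitions of `r` equals the minimum of `∇` over the set `S` of partitions of the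
form `(β,…,β,u_β,0,…,0)` (all nonzero parts equal `β` except possibly the last nonzero part
`u_β` with `0 < u_β ≤ β`) with `α + 1 ≤ β ≤ min(k₂, r)`.
Here `w 0 = 0`, `w t = i₂ + t` for `t ≥ 1`, and
`∇(π) = (i₁+1)·w(π₁) + Σ_{i=2}^{k₁} w(π_i)`. -/
theorem stmt_15 (k₁ k₂ : ℕ) (hk₁ : 0 < k₁) (hk₂ : 0 < k₂) (i₁ i₂ : ℕ)
    (r α : ℕ) (hrα : α * k₁ < r) (hrα' : r ≤ (α + 1) * k₁) (hr : r ≤ k₁ * k₂)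
    (w : ℕ → ℕ) (hw0 : w 0 = 0) (hw : ∀ t, 1 ≤ t → w t = i₂ + t)
    (nabla : (Fin k₁ → ℕ) → ℕ)
    (hnabla : ∀ π : Fin k₁ → ℕ,
      nabla π = (i₁ + 1) * w (π ⟨0, hk₁⟩) +
        ∑ i ∈ Finset.univ.erase ⟨0, hk₁⟩, w (π i)) :
    sInf {v : ℕ | ∃ π : Fin k₁ → ℕ, Antitone π ∧ (∑ i, π i = r) ∧ (∀ i, π i ≤ k₂) ∧
        v = nabla π} =
      sInf {v : ℕ | ∃ π : Fin k₁ → ℕ, Antitone π ∧ (∑ i, π i = r) ∧ (∀ i, π i ≤ k₂) ∧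
        (∃ β u e : ℕ, α + 1 ≤ β ∧ β ≤ min k₂ r ∧ 0 < u ∧ u ≤ β ∧
          ∀ i : Fin k₁,
            ((i : ℕ) < e → π i = β) ∧ ((i : ℕ) = e → π i = u) ∧ (e < (i : ℕ) → π i = 0)) ∧
        v = nabla π} :=
  stmt_15_general k₁ k₂ hk₁ i₁ i₂ r α hrα w hw0 hw nabla hnabla
end

section
/- Let p be a prime, F_q a finite field of characteristic p, s_1,…,s_n positive integers, and m_1,…,m_n positive integers with m_j ≤ p^{s_j} for all j. Let C = ⟨(x_1 − 1)^{m_1}···(x_n − 1)^{m_n}⟩ ⊆ R = F_q[x_1,…,x_n]/⟨x_1^{p^{s_1}} − 1, …, x_n^{p^{s_n}} − 1⟩. For each ℓ ∈ {1,…,n} let Q_ℓ = { a = (a_1,…,a_n) ∈ ℕ^n : 0 ≤ a_ℓ < m_ℓ and 0 ≤ a_j < p^{s_j} for all j ≠ ℓ }, and let Q = Q_1 ∪ ⋯ ∪ Q_n. Then for any polynomial g ∈ F_q[x_1,…,x_n] whose degree in each variable x_j is less than p^{s_j}, the class of g in R belongs to C if and only if D^{[a]}(g)(1,…,1) = 0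 for all a ∈ Q. -/
/-!
The Hasse derivative `D^[a] g (1,…,1)` is the coefficient of `x^a` in `g(x₁ + 1, …, x_n + 1)`.
The substitution `x_j ↦ x_j + 1` is an automorphism of `F[x]` sending `x_j - 1` to `x_j` and,
in characteristic `p`, `x_j ^ p ^ s_j - 1` to `x_j ^ p ^ s_j`. It therefore carries the preimage
of `C` in `F[x]` onto the monomial ideal `⟨x^m, x_1 ^ p ^ s_1, …, x_n ^ p ^ s_n⟩`, and a
polynomial lies in a monomial ideal iff its coefficients vanish at all exponents divisible by no
generator. Since `m ≤ p ^ s`, these exponents are exactly the elements of `Q`.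
-/

open MvPolynomial

theorem exists_lt_and_forall_ne_lt_iff {ι : Type*} {m N a : ι → ℕ} (h : m ≤ N) :
    (∃ ℓ, a ℓ < m ℓ ∧ ∀ j ≠ ℓ, a j < N j) ↔ ¬m ≤ a ∧ ∀ j, a j < N j := by
  constructor
  · rintro ⟨ℓ, hℓ, hN⟩
    refine ⟨fun hma => (hma ℓ).not_gt hℓ, fun j => ?_⟩
    rcases eq_or_ne j ℓ with rfl | hj
    · exact hℓ.trans_le (h j)
    · exact hN j hj
  · rintro ⟨hma, hN⟩
    obtain ⟨ℓ, hℓ⟩ : ∃ ℓ, ¬m ℓ ≤ a ℓ := by simpa [Pi.le_def] using hma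
    exact ⟨ℓ, not_le.1 hℓ, fun j _ => hN j⟩

namespace MvPolynomial

open Finset

variable {σ R : Type*} [CommRing R]

theorem X_add_one_pow (j : σ) (k : ℕ) :
    (X j + 1 : MvPolynomial σ R) ^ k =
      ∑ i ∈ range (k + 1), monomial (Finsupp.single j i) (k.choose i : R) := by
  simp_rw [add_pow, one_pow, mul_one, X_pow_eq_monomial, ← C_eq_coe_nat, mul_comm _ (C _),
    C_mul_monomial, mul_one]

theorem coeff_prod_X_add_one_pow [Fintype σ] (d a : σ →₀ ℕ) :
    coeff a (∏ j, (X j + 1 : MvPolynomial σ R) ^ d j) = ∏ j, ((d j).choose (a j) : R) := by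
  classical
  simp_rw [X_add_one_pow, prod_univ_sum, ← monomial_sum_prod,
    ← Finsupp.equivFunOnFinite_symm_eq_sum, coeff_sum, coeff_monomial]
  simp only [Equiv.symm_apply_eq, sum_ite_eq', Fintype.mem_piFinset, mem_range, Nat.lt_succ_iff,
    Finsupp.equivFunOnFinite_apply, ite_eq_left_iff, not_forall, not_le, forall_exists_index]
  intro j hj
  exact (prod_eq_zero (mem_univ j) (by rw [Nat.choose_eq_zero_of_lt hj, Nat.cast_zero])).symm

variable (σ R) in
noncomputable def shiftOne : MvPolynomial σ R ≃ₐ[R] MvPolynomial σ R :=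
  AlgEquiv.ofAlgHom (aeval fun j => X j + 1) (aeval fun j => X j - 1)
    (algHom_ext fun j => by simp) (algHom_ext fun j => by simp)

@[simp]
theorem shiftOne_X (j : σ) : shiftOne σ R (X j) = X j + 1 :=
  aeval_X _ j

theorem shiftOne_X_sub_one (j : σ) : shiftOne σ R (X j - 1) = X j := by
  simp

theorem shiftOne_X_pow_sub_one {p : ℕ} [ExpChar R p] (j : σ) (k : ℕ) :
    shiftOne σ R (X j ^ p ^ k - 1) = X j ^ p ^ k := by
  rw [map_sub, map_pow, shiftOne_X, add_pow_expChar_pow, one_pow, map_one, add_sub_cancel_right]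

theorem coeff_shiftOne [Fintype σ] (g : MvPolynomial σ R) (a : σ →₀ ℕ) :
    coeff a (shiftOne σ R g) =
      ∑ d ∈ g.support, coeff d g * ∏ j, ((d j).choose (a j) : R) := by
  conv_lhs => rw [g.as_sum, map_sum, coeff_sum]
  refine sum_congr rfl fun d _ => ?_
  rw [shiftOne, AlgEquiv.ofAlgHom_apply, aeval_monomial,
    Finsupp.prod_fintype _ _ fun _ => pow_zero _, algebraMap_eq, coeff_C_mul,
    coeff_prod_X_add_one_pow]

theorem map_shiftOne_span_sup_span [Fintype σ] {p : ℕ} [ExpChar R p] (m k : σ → ℕ) :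
    (Ideal.span {∏ j, (X j - 1) ^ m j} ⊔ Ideal.span (Set.range fun j => X j ^ p ^ k j - 1)).map
        (shiftOne σ R) =
      Ideal.span ((fun s => monomial s (1 : R)) ''
        insert (Finsupp.equivFunOnFinite.symm m)
          (Set.range fun j => Finsupp.single j (p ^ k j))) := by
  rw [Ideal.map_sup, Ideal.map_span, Ideal.map_span, Set.image_insert_eq, Ideal.span_insert,
    Set.image_singleton, ← Set.range_comp, ← Set.range_comp]
  congr 2
  · rw [Finsupp.equivFunOnFinite_symm_eq_sum, monomial_sum_one]
    simp_rw [map_prod, map_pow, shiftOne_X_sub_one, X_pow_eq_monomial]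
  · congr 1
    funext j
    exact (shiftOne_X_pow_sub_one j (k j)).trans X_pow_eq_monomial

theorem mem_span_monomial_insert_single_iff {S : Type*} [CommSemiring S] [Finite σ]
    {m N : σ → ℕ} (h : m ≤ N) (f : MvPolynomial σ S) :
    f ∈ Ideal.span ((fun s => monomial s (1 : S)) ''
        insert (Finsupp.equivFunOnFinite.symm m) (Set.range fun j => Finsupp.single j (N j))) ↔
      ∀ a : σ → ℕ, (∃ ℓ, a ℓ < m ℓ ∧ ∀ j ≠ ℓ, a j < N j) →
        coeff (Finsupp.equivFunOnFinite.symm a) f = 0 := by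
  simp_rw [mem_ideal_span_monomial_image, exists_lt_and_forall_ne_lt_iff h, Set.exists_mem_insert,
    Set.exists_range_iff, Finsupp.single_le_iff]
  constructor
  · rintro H a ⟨hma, haN⟩
    by_contra hne
    rcases H _ (mem_support_iff.2 hne) with hle | ⟨j, hj⟩
    · exact hma fun j => Finsupp.le_def.1 hle j
    · exact (haN j).not_ge hj
  · intro H a ha
    by_contra! hno
    refine mem_support_iff.1 ha ?_
    simpa using H a ⟨fun hma => hno.1 (Finsupp.le_def.2 hma), hno.2⟩

end MvPolynomial

theorem stmt_18_general (p : ℕ) (hp : p.Prime) (F : Type) [Field F] [CharP F p]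
    (n : ℕ) (s m : Fin n → ℕ)
    (hm' : ∀ j, m j ≤ p ^ s j)
    (I : Ideal (MvPolynomial (Fin n) F))
    (hI : I = Ideal.span (Set.range fun j : Fin n => X j ^ p ^ s j - 1))
    (C : Ideal (MvPolynomial (Fin n) F ⧸ I))
    (hC : C = Ideal.span {Ideal.Quotient.mk I (∏ j : Fin n, (X j - 1) ^ m j)})
    (g : MvPolynomial (Fin n) F) :
    Ideal.Quotient.mk I g ∈ C ↔
      ∀ a : Fin n → ℕ, (∃ ℓ, a ℓ < m ℓ ∧ ∀ j ≠ ℓ, a j < p ^ s j) →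
        ∑ d ∈ g.support, coeff d g * ∏ j : Fin n, ((d j).choose (a j) : F) = 0 := by
  have : Fact p.Prime := ⟨hp⟩
  subst hI hC
  rw [← Set.image_singleton, ← Ideal.map_span, Ideal.mem_quotient_iff_mem_sup,
    ← Ideal.comap_map_of_bijective _ (I := _ ⊔ _) (shiftOne (Fin n) F).bijective,
    Ideal.mem_comap, map_shiftOne_span_sup_span, mem_span_monomial_insert_single_iff hm']
  simp only [coeff_shiftOne, Finsupp.coe_equivFunOnFinite_symm]

/-- Codeword test via Hasse derivatives: for the monomial-like code
`C = ⟨(x₁−1)^{m₁}⋯(x_n−1)^{m_n}⟩ ⊆ F_q[x]/⟨x_j^{p^{s_j}}−1⟩` and a degree-bounded polynomial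
`g`, the class of `g` lies in `C` iff the Hasse derivative of `g` in direction `a` evaluated
at `(1,…,1)` vanishes for every `a ∈ Q = Q₁ ∪ ⋯ ∪ Q_n`, where
`Q_ℓ = {a : a_ℓ < m_ℓ and a_j < p^{s_j} for all j ≠ ℓ}`. The evaluated Hasse derivative is
`Σ_d g_d · C(d₁,a₁)⋯C(d_n,a_n)`. -/
theorem stmt_18 (p : ℕ) (hp : p.Prime) (F : Type) [Field F] [Fintype F] [CharP F p]
    (n : ℕ) (s m : Fin n → ℕ) (hs : ∀ j, 0 < s j) (hm : ∀ j, 0 < m j)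
    (hm' : ∀ j, m j ≤ p ^ s j)
    (I : Ideal (MvPolynomial (Fin n) F))
    (hI : I = Ideal.span (Set.range fun j : Fin n => X j ^ p ^ s j - 1))
    (C : Ideal (MvPolynomial (Fin n) F ⧸ I))
    (hC : C = Ideal.span {Ideal.Quotient.mk I (∏ j : Fin n, (X j - 1) ^ m j)})
    (g : MvPolynomial (Fin n) F) (hg : ∀ j, degreeOf j g < p ^ s j) :
    Ideal.Quotient.mk I g ∈ C ↔
      ∀ a : Fin n → ℕ, (∃ ℓ, a ℓ < m ℓ ∧ ∀ j ≠ ℓ, a j < p ^ s j) →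
        ∑ d ∈ g.support, coeff d g * ∏ j : Fin n, ((d j).choose (a j) : F) = 0 :=
  stmt_18_general p hp F n s m hm' I hI C hC g
end
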